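/- arXiv:1910.12550 — 4 statements merged into one kernel-verified Lean document; each statement's English description precedes it below -/
import Mathlib

section
/- Let S be the atomic singular inner function S(z) = exp(-(1+z)/(1-z)) for z in the unit disc D, and let f be a Bloch function with lim_{z→1, z∈D} |f(z)| = ∞. Then the function F defined by F(z) = S(z)f(z) is not a normal function; that is, sup_{z∈D} (1-|z|²)|F'(z)|/(1+|F(z)|²) = ∞. -/
open Complex Filter Set

set_option maxHeartbeats 2000000 in
/-- **Theorem (Girela, Theorem 1).** Let `S` be the atomic singular inner function
`S z = exp (-(1+z)/(1-z))` on the unit disc `D`, and let `f` be a Bloch function with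
`|f z| → ∞` as `z → 1` within `D`. Then `F = S · f` is not a normal function. -/
theorem stmt1
    (S : ℂ → ℂ) (hS : ∀ z : ℂ, S z = Complex.exp (-((1 + z) / (1 - z))))
    (f : ℂ → ℂ) (hf : DifferentiableOn ℂ f (Metric.ball (0 : ℂ) 1))
    (hBloch : ∃ C : ℝ, ∀ z ∈ Metric.ball (0 : ℂ) 1,
      (1 - ‖z‖ ^ 2) * ‖deriv f z‖ ≤ C)
    (hlim : Tendsto (fun z => ‖f z‖)
      (nhdsWithin 1 (Metric.ball (0 : ℂ) 1)) atTop) :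
    ¬ ∃ C : ℝ, ∀ z ∈ Metric.ball (0 : ℂ) 1,
      (1 - ‖z‖ ^ 2) * ‖deriv (fun w => S w * f w) z‖
        / (1 + ‖S z * f z‖ ^ 2) ≤ C := by
  have hSfun : S = fun w => Complex.exp (-((1 + w) / (1 - w))) := funext hS
  subst hSfun
  rintro ⟨C₀, hC₀⟩
  simp only at hC₀
  obtain ⟨B, hB⟩ := hBloch
  set C : ℝ := max B 1 with hCdef
  have hC1 : (1:ℝ) ≤ C := le_max_right _ _
  have hC0 : (0:ℝ) ≤ C := by linarith
  have hBC : ∀ z ∈ Metric.ball (0:ℂ) 1,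
      (1 - ‖z‖ ^ 2) * ‖deriv f z‖ ≤ C :=
    fun z hz => (hB z hz).trans (le_max_left _ _)
  have hf0 : (0:ℝ) ≤ ‖f 0‖ := norm_nonneg _
  set t : ℝ := max (4*(C + ‖f 0‖ + 1)) (C₀ + C/2 + 1) with htdef
  have ht4 : 4*(C + ‖f 0‖ + 1) ≤ t := le_max_left _ _
  have htC₀ : C₀ + C/2 + 1 ≤ t := le_max_right _ _
  have ht1 : (1:ℝ) < t := by nlinarith
  have htpos : (0:ℝ) < t := by linarith
  -- the horocycle path
  set γ : ℝ → ℂ := fun s => ((t:ℂ) - 1 + s*I) / ((t:ℂ) + 1 + s*I) with hγdef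
  have hden : ∀ s : ℝ, ((t:ℂ) + 1 + s*I) ≠ 0 := by
    intro s h
    have := congrArg Complex.re h
    simp at this
    linarith
  have hnormden : ∀ s : ℝ, Complex.normSq ((t:ℂ) + 1 + s*I) = (t+1)^2 + s^2 := by
    intro s; simp [Complex.normSq_apply]; ring
  have hNpos : ∀ s : ℝ, (0:ℝ) < (t+1)^2 + s^2 := by
    intro s; positivity
  have habs_sq : ∀ s : ℝ, (‖γ s‖)^2 = ((t-1)^2 + s^2) / ((t+1)^2 + s^2) := by
    intro s
    simp only [hγdef]
    rw [norm_div, div_pow, Complex.sq_norm, Complex.sq_norm, hnormden]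
    congr 1
    simp [Complex.normSq_apply]; ring
  have hmem : ∀ s : ℝ, γ s ∈ Metric.ball (0:ℂ) 1 := by
    intro s
    rw [Metric.mem_ball, dist_zero_right]
    have h2 : (‖γ s‖)^2 < 1 := by
      rw [habs_sq s, div_lt_one (hNpos s)]
      nlinarith
    nlinarith [norm_nonneg (γ s)]
  have hone_sub : ∀ s : ℝ, (1:ℂ) - γ s = 2 / ((t:ℂ) + 1 + s*I) := by
    intro s
    simp only [hγdef]
    rw [eq_div_iff (hden s), sub_mul, one_mul, div_mul_cancel₀ _ (hden s)]
    ring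
  have hone_sub_ne : ∀ s : ℝ, (1:ℂ) - γ s ≠ 0 := by
    intro s
    rw [hone_sub s]
    exact div_ne_zero two_ne_zero (hden s)
  have hmob : ∀ s : ℝ, (1 + γ s) / (1 - γ s) = (t:ℂ) + s*I := by
    intro s
    rw [div_eq_iff (hone_sub_ne s)]
    simp only [hγdef]
    field_simp [hden s]
    ring
  have h1sub : ∀ s : ℝ, 1 - (‖γ s‖)^2 = 4*t/((t+1)^2 + s^2) := by
    intro s
    rw [habs_sq s]
    field_simp
    ring
  -- continuity of the path
  have hγcont : Continuous γ := by
    apply Continuous.div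
    · fun_prop
    · fun_prop
    · exact hden
  -- the path tends to 1 within the disc
  have hγtend : Tendsto γ atTop (nhds (1:ℂ)) := by
    rw [tendsto_iff_norm_sub_tendsto_zero]
    apply squeeze_zero' (Eventually.of_forall fun s => norm_nonneg _)
      (g := fun s : ℝ => 2/s)
    · filter_upwards [eventually_ge_atTop (1:ℝ)] with s hs
      have heq : γ s - 1 = -(2 / ((t:ℂ) + 1 + s*I)) := by
        rw [← hone_sub s]; ring
      rw [heq, norm_neg, norm_div]
      have hle : s ≤ ‖(t:ℂ) + 1 + s*I‖ := by
        have h1 := Complex.abs_im_le_norm ((t:ℂ) + 1 + s*I)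
        have h2 : ((t:ℂ) + 1 + s*I).im = s := by simp
        rw [h2] at h1
        exact (le_abs_self s).trans h1
      have hspos : (0:ℝ) < s := by linarith
      have hn2 : ‖(2:ℂ)‖ = 2 := by norm_num
      rw [hn2]
      exact div_le_div_of_nonneg_left (by norm_num) hspos hle
    · exact Tendsto.div_atTop tendsto_const_nhds tendsto_id
  have hγtendW : Tendsto γ atTop (nhdsWithin 1 (Metric.ball (0:ℂ) 1)) :=
    tendsto_nhdsWithin_iff.mpr ⟨hγtend, Eventually.of_forall hmem⟩
  have hhtend : Tendsto (fun s => ‖f (γ s)‖) atTop atTop := hlim.comp hγtendW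
  have hfc : Continuous (fun s => ‖f (γ s)‖) :=
    continuous_norm.comp (hf.continuousOn.comp_continuous hγcont hmem)
  -- bound on |f (γ 0)| via the Bloch condition
  set r₀ : ℝ := (t-1)/(t+1) with hr₀def
  have hr₀0 : 0 ≤ r₀ := by
    apply div_nonneg <;> linarith
  have hr₀1 : r₀ < 1 := by
    rw [div_lt_one (by linarith)]; linarith
  have hr₀mul : r₀ * (t+1) = t - 1 := by
    rw [hr₀def, div_mul_cancel₀ _ (show t+1 ≠ 0 by linarith)]
  have hγ0le : ‖γ 0‖ ≤ r₀ := by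
    have h2 : (‖γ 0‖)^2 = r₀^2 := by
      rw [habs_sq 0, hr₀def, div_pow]
      norm_num
    nlinarith [norm_nonneg (γ 0)]
  have hsub : Metric.closedBall (0:ℂ) r₀ ⊆ Metric.ball (0:ℂ) 1 :=
    Metric.closedBall_subset_ball hr₀1
  have hdiff : ∀ x ∈ Metric.closedBall (0:ℂ) r₀, DifferentiableAt ℂ f x :=
    fun x hx => hf.differentiableAt (Metric.isOpen_ball.mem_nhds (hsub hx))
  have hbound : ∀ x ∈ Metric.closedBall (0:ℂ) r₀, ‖deriv f x‖ ≤ C*(t+1)^2/(4*t) := by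
    intro x hx
    have hxa : ‖x‖ ≤ r₀ := by
      rw [Metric.mem_closedBall, dist_zero_right] at hx
      exact hx
    have hxa0 : 0 ≤ ‖x‖ := norm_nonneg _
    have hmul : ‖x‖ * (t+1) ≤ t - 1 := by
      calc ‖x‖ * (t+1) ≤ r₀ * (t+1) :=
            mul_le_mul_of_nonneg_right hxa (by linarith)
        _ = t - 1 := hr₀mul
    have ha2 : (‖x‖)^2 * (t+1)^2 ≤ (t-1)^2 := by
      nlinarith [mul_nonneg hxa0 (show (0:ℝ) ≤ t+1 by linarith)]
    have h4t : 4*t ≤ (1 - (‖x‖)^2)*(t+1)^2 := by nlinarith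
    have hB := hBC x (hsub hx)
    have hD0 : 0 ≤ ‖deriv f x‖ := norm_nonneg _
    rw [le_div_iff₀ (show (0:ℝ) < 4*t by linarith)]
    calc ‖deriv f x‖ * (4*t)
        ≤ ‖deriv f x‖ * ((1 - (‖x‖)^2)*(t+1)^2) :=
          mul_le_mul_of_nonneg_left h4t hD0
      _ = ((1 - ‖x‖ ^ 2) * ‖deriv f x‖) * (t+1)^2 := by ring
      _ ≤ C * (t+1)^2 := mul_le_mul_of_nonneg_right hB (sq_nonneg _)
  have hMV : ‖f (γ 0) - f 0‖ ≤ (C*(t+1)^2/(4*t)) * ‖γ 0 - 0‖ :=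
    (convex_closedBall (0:ℂ) r₀).norm_image_sub_le_of_norm_deriv_le hdiff hbound
      (by simpa using hr₀0)
      (by rw [Metric.mem_closedBall, dist_zero_right]; exact hγ0le)
  have h0le : ‖f (γ 0)‖ ≤ ‖f 0‖ + C*t := by
    have h1 : ‖γ 0 - 0‖ ≤ 1 := by
      rw [sub_zero]
      exact hγ0le.trans hr₀1.le
    have hM0 : 0 ≤ C*(t+1)^2/(4*t) := by positivity
    have hMt : C*(t+1)^2/(4*t) ≤ C*t := by
      rw [div_le_iff₀ (show (0:ℝ) < 4*t by linarith)]
      nlinarith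
    have h2 : ‖f (γ 0) - f 0‖ ≤ C*t := by
      calc ‖f (γ 0) - f 0‖ ≤ (C*(t+1)^2/(4*t)) * ‖γ 0 - 0‖ := hMV
        _ ≤ (C*(t+1)^2/(4*t)) * 1 := mul_le_mul_of_nonneg_left h1 hM0
        _ = C*(t+1)^2/(4*t) := mul_one _
        _ ≤ C*t := hMt
    calc ‖f (γ 0)‖ = ‖f 0 + (f (γ 0) - f 0)‖ := by
          ring_nf
      _ ≤ ‖f 0‖ + ‖f (γ 0) - f 0‖ := norm_add_le _ _
      _ ≤ ‖f 0‖ + C*t := by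
          linarith
  have hexp : ‖f 0‖ + C*t < Real.exp t := by
    have h2 := Real.add_one_le_exp (t/2)
    have h3 : (t/2+1)^2 ≤ Real.exp (t/2)^2 := by
      nlinarith [Real.exp_pos (t/2)]
    have h4 : Real.exp t = Real.exp (t/2)^2 := by
      rw [sq, ← Real.exp_add]; norm_num
    rw [h4]
    nlinarith [mul_le_mul_of_nonneg_left ht4 htpos.le,
      mul_nonneg (show (0:ℝ) ≤ t - 1 by linarith) hf0]
  -- find a point on the horocycle where |f| = exp t
  obtain ⟨s₁, hs₁0, hs₁⟩ : ∃ s₁ : ℝ, 0 ≤ s₁ ∧ Real.exp t ≤ ‖f (γ s₁)‖ := by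
    obtain ⟨s₁, h1, h2⟩ :=
      ((hhtend.eventually_ge_atTop (Real.exp t)).and (eventually_ge_atTop (0:ℝ))).exists
    exact ⟨s₁, h2, h1⟩
  obtain ⟨s₂, -, hs₂⟩ :=
    intermediate_value_Icc hs₁0 hfc.continuousOn
      ⟨h0le.trans hexp.le, hs₁⟩
  set z : ℂ := γ s₂ with hzdef
  have hz : z ∈ Metric.ball (0:ℂ) 1 := hmem s₂
  have hfz : ‖f z‖ = Real.exp t := hs₂
  have hmobz : (1 + z) / (1 - z) = (t:ℂ) + s₂*I := hmob s₂
  have hSz : ‖Complex.exp (-((1+z)/(1-z)))‖ = Real.exp (-t) := by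
    rw [hmobz, Complex.norm_exp]
    congr 1
    simp
  have h1z : (1:ℂ) - z ≠ 0 := hone_sub_ne s₂
  have habs1z : (‖1 - z‖)^2 = 4/((t+1)^2 + s₂^2) := by
    rw [hone_sub s₂, norm_div, div_pow, Complex.sq_norm ((t:ℂ)+1+(s₂:ℝ)*I), hnormden]
    norm_num
  have hP : 1 - ‖z‖ ^ 2 = 4*t/((t+1)^2 + s₂^2) := h1sub s₂
  clear_value z
  -- derivative computation
  have hd1 : HasDerivAt (fun w : ℂ => (1+w)/(1-w))
      ((1*(1-z) - (1+z)*(-1))/(1-z)^2) z :=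
    ((hasDerivAt_id z).const_add 1).div ((hasDerivAt_id z).const_sub 1) h1z
  have hd2 : HasDerivAt (fun w : ℂ => Complex.exp (-((1+w)/(1-w))))
      (Complex.exp (-((1+z)/(1-z))) * (-((1*(1-z) - (1+z)*(-1))/(1-z)^2))) z :=
    hd1.neg.cexp
  have hdf : HasDerivAt f (deriv f z) z :=
    (hf.differentiableAt (Metric.isOpen_ball.mem_nhds hz)).hasDerivAt
  have hdF : HasDerivAt (fun w => Complex.exp (-((1+w)/(1-w))) * f w)
      (Complex.exp (-((1+z)/(1-z))) * (-((1*(1-z) - (1+z)*(-1))/(1-z)^2)) * f z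
        + Complex.exp (-((1+z)/(1-z))) * deriv f z) z := hd2.mul hdf
  have hderiv := hdF.deriv
  -- abs computations
  have hnum : ((1:ℂ)*(1-z) - (1+z)*(-1)) = 2 := by ring
  have hPpos : 0 < 1 - ‖z‖ ^ 2 := by
    rw [hP]; positivity
  have hee : Real.exp (-t) * Real.exp t = 1 := by
    rw [← Real.exp_add]; simp
  rw [hnum] at hderiv
  set u : ℂ := Complex.exp (-((1+z)/(1-z))) * (-(2/(1-z)^2)) * f z with hudef
  set v : ℂ := Complex.exp (-((1+z)/(1-z))) * deriv f z with hvdef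
  have hu : ‖u‖ = Real.exp (-t) * (2/((‖1-z‖)^2)) * Real.exp t := by
    rw [hudef]
    rw [norm_mul]
    rw [norm_mul]
    rw [hSz]
    rw [hfz]
    rw [norm_neg]
    rw [norm_div]
    rw [norm_pow]
    norm_num
  have hPu : (1 - ‖z‖ ^ 2) * ‖u‖ = 2*t := by
    have hN := (hNpos s₂).ne'
    have h24 : (2:ℝ)/(4/((t+1)^2+s₂^2)) = ((t+1)^2+s₂^2)/2 := by
      rw [div_div_eq_mul_div]; ring
    rw [hu, hP, habs1z, h24]
    have hre : 4*t/((t+1)^2+s₂^2) * (Real.exp (-t) * (((t+1)^2+s₂^2)/2) * Real.exp t)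
        = (Real.exp (-t) * Real.exp t) * (2*t) * (((t+1)^2+s₂^2) / ((t+1)^2+s₂^2)) := by
      ring
    rw [hre, hee, div_self hN]
    ring
  have hPv : (1 - ‖z‖ ^ 2) * ‖v‖ ≤ C := by
    rw [hvdef, norm_mul, hSz]
    have he1 : Real.exp (-t) ≤ 1 := by
      rw [show (1:ℝ) = Real.exp 0 by simp]
      exact Real.exp_le_exp.mpr (by linarith)
    calc (1 - ‖z‖ ^ 2) * (Real.exp (-t) * ‖deriv f z‖)
        = Real.exp (-t) * ((1 - ‖z‖ ^ 2) * ‖deriv f z‖) := by ring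
      _ ≤ Real.exp (-t) * C := mul_le_mul_of_nonneg_left (hBC z hz) (Real.exp_pos _).le
      _ ≤ 1 * C := mul_le_mul_of_nonneg_right he1 hC0
      _ = C := one_mul _
  have htri : ‖u‖ - ‖v‖ ≤ ‖u + v‖ := by
    have h' : ‖u‖ ≤ ‖u + v‖ + ‖v‖ := by
      simpa using norm_add_le (u + v) (-v)
    linarith
  have hlow : 2*t - C ≤ (1 - ‖z‖ ^ 2) * ‖u + v‖ := by
    have h1 : (1 - ‖z‖ ^ 2) * (‖u‖ - ‖v‖)
        ≤ (1 - ‖z‖ ^ 2) * ‖u + v‖ :=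
      mul_le_mul_of_nonneg_left htri hPpos.le
    nlinarith
  have hden2 : 1 + ‖Complex.exp (-((1+z)/(1-z))) * f z‖^2 = 2 := by
    rw [norm_mul, hSz, hfz, hee]
    norm_num
  have hfin := hC₀ z hz
  rw [hderiv, hden2] at hfin
  rw [div_le_iff₀ (by norm_num : (0:ℝ) < 2)] at hfin
  linarith
end

section
/- The function f defined on the unit disc D by f(z) = exp(-(1+z)/(1-z)) · log(1/(1-z)) (principal branch of the logarithm) is not a normal function; that is, sup_{z∈D} (1-|z|²)|f'(z)|/(1+|f(z)|²) = ∞. -/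
open Complex Filter Set

lemma hasDerivAt_g_aux (z : ℂ) (h1 : (1:ℂ) - z ≠ 0) (h2 : ((1:ℂ) - z)⁻¹ ∈ Complex.slitPlane) :
    HasDerivAt (fun w => Complex.exp (-((1 + w) / (1 - w))) * Complex.log ((1 - w)⁻¹))
      (Complex.exp (-((1 + z) / (1 - z))) *
        (-2 / (1 - z)^2 * Complex.log ((1 - z)⁻¹) + 1 / (1 - z))) z := by
  have hd1 : HasDerivAt (fun w : ℂ => (1:ℂ) - w) (-1) z := by
    simpa using (hasDerivAt_id z).const_sub 1
  have hd2 : HasDerivAt (fun w : ℂ => ((1:ℂ) - w)⁻¹) (-(-1) / (1-z)^2) z := hd1.inv h1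
  have hd3 : HasDerivAt (fun w : ℂ => Complex.log ((1 - w)⁻¹))
      (((1-z)⁻¹)⁻¹ * (-(-1) / (1-z)^2)) z :=
    HasDerivAt.comp (h₂ := Complex.log) z (Complex.hasDerivAt_log h2) hd2
  have hd4 : HasDerivAt (fun w : ℂ => (1 + w)/(1 - w)) ((1*(1-z) - (1+z)*(-1))/(1-z)^2) z :=
    ((hasDerivAt_id z).const_add 1).div hd1 h1
  have hd6 := ((hd4.neg).cexp).mul hd3
  refine hd6.congr_deriv ?_
  simp only [Pi.neg_apply]
  rw [inv_inv]
  field_simp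
  ring

set_option maxHeartbeats 1000000 in
/-- The function `f z = exp (-(1+z)/(1-z)) · log (1/(1-z))` on the unit disc is not a
normal function. -/
theorem stmt2
    (f : ℂ → ℂ)
    (hf : ∀ z : ℂ, f z = Complex.exp (-((1 + z) / (1 - z))) * Complex.log (1 / (1 - z))) :
    ¬ ∃ C : ℝ, ∀ z ∈ Metric.ball (0 : ℂ) 1,
      (1 - ‖z‖ ^ 2) * ‖deriv f z‖
        / (1 + ‖f z‖ ^ 2) ≤ C := by
  rintro ⟨C, hC⟩
  obtain ⟨n, hnC⟩ := exists_nat_gt (max 3 (10*C))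
  have hn : 3 ≤ (n:ℝ) := le_of_lt ((le_max_left 3 (10*C)).trans_lt hnC)
  have h10C : 10*C < (n:ℝ) := (le_max_right 3 (10*C)).trans_lt hnC
  set e1 : ℝ := Real.exp n with he1
  set T : ℝ := Real.exp e1 with hT
  have he10 : 0 < e1 := Real.exp_pos _
  have he14 : 4 ≤ e1 := by
    have := Real.add_one_le_exp (n:ℝ); linarith
  have hnT : (n:ℝ) + 1 ≤ T := by
    have h1 := Real.add_one_le_exp (n:ℝ)
    have h2 := Real.add_one_le_exp e1
    linarith
  have hT1 : (1:ℝ) ≤ T := by linarith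
  have hT0 : 0 < T := by linarith
  set W : ℂ := ⟨(n:ℝ)+1, T⟩ with hWdef
  have hWre : W.re = (n:ℝ)+1 := rfl
  have hWim : W.im = T := rfl
  have hW0 : W ≠ 0 := by
    intro h
    have := congrArg Complex.re h
    rw [hWre] at this
    simp at this
    linarith
  set z : ℂ := (W - 2)/W with hzdef
  have h1z : (1:ℂ) - z = 2/W := by
    rw [hzdef]; field_simp; ring
  have h1z0 : (1:ℂ) - z ≠ 0 := by
    rw [h1z]; exact div_ne_zero two_ne_zero hW0
  have hinv : ((1:ℂ) - z)⁻¹ = W/2 := by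
    rw [h1z, inv_div]
  have hu : -((1 + z)/(1 - z)) = 1 - W := by
    rw [hzdef, h1z]; field_simp; ring
  have hslit : ((1:ℂ) - z)⁻¹ ∈ Complex.slitPlane := by
    rw [hinv]
    refine Complex.mem_slitPlane_iff.mpr (Or.inl ?_)
    simp [hWre]
    positivity
  -- abs W bounds
  set a : ℝ := ‖W‖ with ha
  have ha2 : a^2 = ((n:ℝ)+1)^2 + T^2 := by
    rw [ha, Complex.sq_norm, Complex.normSq_apply, hWre, hWim]; ring
  have haT : T ≤ a := by
    have h := Complex.abs_im_le_norm W
    rw [hWim] at h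
    calc T = |T| := (abs_of_pos hT0).symm
    _ ≤ a := h
  have ha2T : a ≤ 2*T := by
    have h := Complex.norm_le_abs_re_add_abs_im W
    rw [hWre, hWim] at h
    have h1 : |(n:ℝ)+1| = (n:ℝ)+1 := abs_of_pos (by positivity)
    have h2 : |T| = T := abs_of_pos hT0
    rw [h1, h2] at h
    linarith
  have ha0 : 0 < a := lt_of_lt_of_le hT0 haT
  -- L := log (W/2) bounds
  set L : ℂ := Complex.log (W/2) with hL
  set l : ℝ := ‖L‖ with hl
  have habsW2 : ‖W/2‖ = a/2 := by
    rw [norm_div, Complex.norm_two, ha]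
  have hLre : L.re = Real.log (a/2) := by
    rw [hL, Complex.log_re, habsW2]
  have hlog2 : Real.log 2 ≤ 1 := by
    have := Real.log_le_sub_one_of_pos (by norm_num : (0:ℝ) < 2); linarith
  have hLre_lb : e1 - 1 ≤ L.re := by
    rw [hLre]
    have h1 : Real.log (T/2) ≤ Real.log (a/2) :=
      Real.log_le_log (by positivity) (by linarith)
    have h2 : Real.log (T/2) = e1 - Real.log 2 := by
      rw [Real.log_div (by positivity) (by norm_num), hT, Real.log_exp]
    linarith
  have hLre_ub : L.re ≤ e1 := by
    rw [hLre]
    have h1 : Real.log (a/2) ≤ Real.log T :=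
      Real.log_le_log (by positivity) (by linarith)
    rw [hT, Real.log_exp] at h1
    exact h1
  have hl_lb : e1 - 1 ≤ l := by
    have h := Complex.abs_re_le_norm L
    have h2 : L.re ≤ |L.re| := le_abs_self _
    rw [← hl] at h
    linarith
  have hl_ub : l ≤ 3*e1 := by
    have h1 := Complex.norm_le_abs_re_add_abs_im L
    have h2 : |L.re| = L.re := abs_of_pos (by linarith)
    have h3 : |L.im| ≤ Real.pi := by
      rw [hL, Complex.log_im]
      exact Complex.abs_arg_le_pi _
    have h4 := Real.pi_le_four
    rw [← hl, h2] at h1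
    linarith
  have hl0 : 0 ≤ l := norm_nonneg _
  -- values of f and deriv f at z
  have hfg : f = fun w => Complex.exp (-((1 + w) / (1 - w))) * Complex.log ((1 - w)⁻¹) := by
    funext w
    rw [hf w, one_div]
  have hlogeq : Complex.log ((1:ℂ) - z)⁻¹ = L := by rw [hinv]
  have hD : deriv f z = Complex.exp (1 - W) * ((W/2) * (1 - W * L)) := by
    rw [hfg, (hasDerivAt_g_aux z h1z0 hslit).deriv, hu, hlogeq, h1z]
    have h2W : (2:ℂ)/W ≠ 0 := div_ne_zero two_ne_zero hW0
    field_simp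
    ring
  have hfz : f z = Complex.exp (1 - W) * L := by
    rw [hf z, hu, one_div, hlogeq]
  set m : ℝ := ‖1 - W*L‖ with hm
  have hm_lb : a * l - 1 ≤ m := by
    have h1 : ‖W*L‖ - ‖(1:ℂ)‖ ≤ ‖W*L - 1‖ := norm_sub_norm_le _ _
    rw [norm_sub_rev] at h1
    simp only [norm_mul, norm_one] at h1
    rw [hm, ha, hl]
    linarith
  have hm0 : 0 ≤ m := norm_nonneg _
  have habs_exp : ‖Complex.exp (1 - W)‖ = e1⁻¹ := by
    rw [Complex.norm_exp]
    have : (1 - W).re = -(n:ℝ) := by simp [hWre]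
    rw [this, Real.exp_neg, he1]
  have habsD : ‖deriv f z‖ = e1⁻¹ * (a/2) * m := by
    rw [hD, norm_mul, norm_mul, habs_exp, norm_div, Complex.norm_two, ← ha, ← hm]; ring
  have habsf : ‖f z‖ = e1⁻¹ * l := by
    rw [hfz, norm_mul, habs_exp, ← hl]
  -- 1 - |z|^2
  have hzsq : ‖z‖ ^ 2 = (((n:ℝ)-1)^2 + T^2) / (((n:ℝ)+1)^2 + T^2) := by
    rw [hzdef, norm_div, div_pow, Complex.sq_norm, Complex.sq_norm,
      Complex.normSq_apply, Complex.normSq_apply]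
    have hre : (W - 2).re = (n:ℝ) - 1 := by simp [Complex.sub_re, hWre]; ring
    have him : (W - 2).im = T := by simp [Complex.sub_im, hWim]
    rw [hre, him, hWre, hWim]
    ring
  have hball : z ∈ Metric.ball (0:ℂ) 1 := by
    rw [Metric.mem_ball, dist_zero_right]
    have h1 : ‖z‖ ^ 2 < 1^2 := by
      rw [hzsq, one_pow]
      rw [div_lt_one (by positivity)]
      nlinarith [hn]
    exact lt_of_pow_lt_pow_left₀ 2 (by norm_num) h1
  have hone_sub : 1 - ‖z‖ ^ 2 = 4*(n:ℝ) / a^2 := by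
    rw [hzsq, ha2]
    rw [eq_div_iff (by positivity)]
    field_simp
    ring
  -- the quantitative bound
  have hQ := hC z hball
  rw [hone_sub, habsD, habsf] at hQ
  -- show n/10 ≤ the quantity
  have hDq_ub : 1 + (e1⁻¹ * l)^2 ≤ 10 := by
    have h1 : e1⁻¹ * l ≤ 3 := by
      rw [inv_mul_le_iff₀ he10]
      linarith
    have h2 : 0 ≤ e1⁻¹ * l := by positivity
    have h3 : (e1⁻¹ * l)^2 ≤ 3^2 := pow_le_pow_left₀ h2 h1 2
    linarith
  have hDq0 : 0 < 1 + (e1⁻¹ * l)^2 := by positivity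
  have hX : (n:ℝ) ≤ 4*(n:ℝ)/a^2 * (e1⁻¹ * (a/2) * m) := by
    have hXeq : 4*(n:ℝ)/a^2 * (e1⁻¹ * (a/2) * m) = 2*(n:ℝ)*m / (a*e1) := by
      field_simp
      ring
    rw [hXeq, le_div_iff₀ (by positivity)]
    have hkey : a * e1 ≤ 2 * m := by
      nlinarith
    nlinarith
  have hfinal : (n:ℝ)/10 ≤ 4*(n:ℝ)/a^2 * (e1⁻¹ * (a/2) * m) / (1 + (e1⁻¹ * l)^2) := by
    apply div_le_div₀ (by positivity) hX hDq0 hDq_ub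
  linarith
end

section
/- If f is a Bloch function on the unit disc D that is not bounded, then there exists a function g analytic in D with g' ∈ H¹ (i.e., sup_{0<r<1} ∫₀^{2π} |g'(re^{iθ})| dθ < ∞) such that the product g·f is not a Bloch function; that is, sup_{z∈D} (1-|z|²)|(gf)'(z)| = ∞. -/
open Complex Filter Set Real

noncomputable def Complex.abs : AbsoluteValue ℂ ℝ where
  toFun := fun z => ‖z‖
  map_mul' := norm_mul
  nonneg' := norm_nonneg
  eq_zero' := fun _ => norm_eq_zero
  add_le' := norm_add_le

@[simp] theorem Complex.norm_eq_abs (z : ℂ) : ‖z‖ = Complex.abs z := rfl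

@[simp] theorem Complex.abs_conj (z : ℂ) : Complex.abs ((starRingEnd ℂ) z) = Complex.abs z :=
  Complex.norm_conj z

@[simp] theorem Complex.abs_ofReal (x : ℝ) : Complex.abs (x : ℂ) = |x| := Complex.norm_real x

@[simp] theorem Complex.abs_exp (z : ℂ) : Complex.abs (Complex.exp z) = Real.exp z.re :=
  Complex.norm_exp z

theorem Complex.continuous_abs : Continuous Complex.abs := continuous_norm

theorem Complex.sq_abs (z : ℂ) : Complex.abs z ^ 2 = Complex.normSq z := Complex.sq_norm z

theorem Complex.normSq_eq_abs (z : ℂ) : Complex.normSq z = Complex.abs z ^ 2 :=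
  (Complex.sq_norm z).symm

theorem Complex.abs.sub_le_add (a b : ℂ) : Complex.abs (a - b) ≤ Complex.abs a + Complex.abs b :=
  norm_sub_le a b

noncomputable def cc (a : ℕ → ℂ) (k : ℕ) : ℝ := (1/2)^(k+1) * (1 - Complex.abs (a k))

noncomputable def TT (a : ℕ → ℂ) (k : ℕ) (z : ℂ) : ℂ :=
  (cc a k : ℝ) * (((starRingEnd ℂ) (a k))⁻¹ * ((1 - (starRingEnd ℂ) (a k) * z)⁻¹ - 1))

noncomputable def TT' (a : ℕ → ℂ) (k : ℕ) (z : ℂ) : ℂ :=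
  (cc a k : ℝ) * ((1 - (starRingEnd ℂ) (a k) * z)⁻¹)^2

noncomputable def gg (a : ℕ → ℂ) (z : ℂ) : ℂ := ∑' k, TT a k z

section basics
variable {a : ℕ → ℂ}

lemma den_lb (b z : ℂ) :
    1 - Complex.abs b * Complex.abs z ≤ Complex.abs (1 - (starRingEnd ℂ) b * z) := by
  have h := Complex.abs.le_sub 1 ((starRingEnd ℂ) b * z)
  simpa [Complex.abs_conj] using h

lemma den_pos {b z : ℂ} (hb : Complex.abs b < 1) (hz : Complex.abs z ≤ 1) :
    0 < 1 - Complex.abs b * Complex.abs z := by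
  nlinarith [Complex.abs.nonneg b, Complex.abs.nonneg z]

lemma den_ne {b z : ℂ} (hb : Complex.abs b < 1) (hz : Complex.abs z ≤ 1) :
    1 - (starRingEnd ℂ) b * z ≠ 0 := by
  intro h
  have h2 := den_lb b z
  rw [h] at h2
  simp only [map_zero] at h2
  nlinarith [den_pos hb hz]

lemma cc_pos (ha : ∀ n, Complex.abs (a n) < 1) (k : ℕ) : 0 < cc a k := by
  have h1 : 0 < 1 - Complex.abs (a k) := by linarith [ha k]
  unfold cc
  exact mul_pos (by positivity) h1

lemma cc_le (k : ℕ) (h : Complex.abs (a k) < 1) (h0 : 0 ≤ Complex.abs (a k)) :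
    cc a k ≤ (1/2)^(k+1) := by
  unfold cc
  nlinarith [pow_pos (by norm_num : (0:ℝ) < 1/2) (k+1)]

-- norm bound on TT' on a disc of radius R
lemma TT'_bound (ha : ∀ n, Complex.abs (a n) < 1) (k : ℕ) {R : ℝ} (hR : R < 1) (hR0 : 0 ≤ R)
    {z : ℂ} (hz : Complex.abs z ≤ R) :
    ‖TT' a k z‖ ≤ (1/2)^(k+1) / (1-R)^2 := by
  have h1 : 1 - R ≤ Complex.abs (1 - (starRingEnd ℂ) (a k) * z) := by
    refine le_trans ?_ (den_lb (a k) z)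
    nlinarith [Complex.abs.nonneg (a k), Complex.abs.nonneg z, ha k]
  have h1R : (0:ℝ) < 1 - R := by linarith
  have habs : Complex.abs (((1 - (starRingEnd ℂ) (a k) * z)⁻¹)^2)
      ≤ ((1-R)⁻¹)^2 := by
    rw [map_pow, map_inv₀]
    apply pow_le_pow_left₀ (by positivity)
    exact inv_anti₀ h1R h1
  have : ‖TT' a k z‖ = cc a k * Complex.abs (((1 - (starRingEnd ℂ) (a k) * z)⁻¹)^2) := by
    unfold TT'
    rw [norm_mul]
    simp [Complex.norm_eq_abs, Complex.abs_ofReal, abs_of_pos (cc_pos ha k)]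
  rw [this, div_eq_mul_inv, ← inv_pow]
  have h2 := cc_le k (ha k) (Complex.abs.nonneg (a k))
  have h3 := cc_pos ha k
  apply mul_le_mul h2 habs (by positivity) (by positivity)

lemma TT_bound (ha : ∀ n, Complex.abs (a n) < 1) (ha2 : ∀ n, 1/2 ≤ Complex.abs (a n))
    (k : ℕ) {z : ℂ} (hz : Complex.abs z ≤ 1) :
    ‖TT a k z‖ ≤ 4 * (1/2)^(k+1) := by
  have hak := ha k
  have hak2 := ha2 k
  have hd : 1 - Complex.abs (a k) ≤ Complex.abs (1 - (starRingEnd ℂ) (a k) * z) := by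
    refine le_trans ?_ (den_lb (a k) z)
    nlinarith [Complex.abs.nonneg (a k), Complex.abs.nonneg z]
  have hdpos : (0:ℝ) < 1 - Complex.abs (a k) := by linarith
  have h1 : Complex.abs ((1 - (starRingEnd ℂ) (a k) * z)⁻¹ - 1)
      ≤ (1 - Complex.abs (a k))⁻¹ + 1 := by
    refine le_trans (Complex.abs.sub_le_add _ _) ?_
    simp only [map_one, map_inv₀]
    gcongr
  have h2 : Complex.abs (((starRingEnd ℂ) (a k))⁻¹) ≤ 2 := by
    rw [map_inv₀, Complex.abs_conj]
    rw [inv_le_comm₀ (by linarith) (by norm_num)]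
    linarith
  have : ‖TT a k z‖ = cc a k * (Complex.abs (((starRingEnd ℂ) (a k))⁻¹)
      * Complex.abs ((1 - (starRingEnd ℂ) (a k) * z)⁻¹ - 1)) := by
    unfold TT
    rw [norm_mul, norm_mul]
    simp [Complex.norm_eq_abs, abs_of_pos (cc_pos ha k)]
  rw [this]
  have hc : cc a k * (Complex.abs (((starRingEnd ℂ) (a k))⁻¹)
      * Complex.abs ((1 - (starRingEnd ℂ) (a k) * z)⁻¹ - 1))
      ≤ (1/2)^(k+1) * (1 - Complex.abs (a k)) * (2 * ((1 - Complex.abs (a k))⁻¹ + 1)) := by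
    unfold cc
    apply mul_le_mul_of_nonneg_left _ (by positivity)
    apply mul_le_mul h2 h1 (Complex.abs.nonneg _) (by norm_num)
  refine le_trans hc ?_
  have hp : (0:ℝ) < (1/2:ℝ)^(k+1) := by positivity
  rw [show (1/2:ℝ)^(k+1) * (1 - Complex.abs (a k)) * (2 * ((1 - Complex.abs (a k))⁻¹ + 1))
    = (1/2)^(k+1) * ((1 - Complex.abs (a k)) * (2 * ((1 - Complex.abs (a k))⁻¹ + 1))) by ring]
  rw [show (4:ℝ) * (1/2)^(k+1) = (1/2)^(k+1) * 4 by ring]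
  apply mul_le_mul_of_nonneg_left _ hp.le
  have : (1 - Complex.abs (a k)) * (2 * ((1 - Complex.abs (a k))⁻¹ + 1))
      = 2 + 2 * (1 - Complex.abs (a k)) := by
    field_simp
  rw [this]
  nlinarith

lemma hasDerivAt_TT (ha : ∀ n, Complex.abs (a n) < 1) (ha2 : ∀ n, 1/2 ≤ Complex.abs (a n))
    (k : ℕ) {z : ℂ} (hz : Complex.abs z < 1) :
    HasDerivAt (TT a k) (TT' a k z) z := by
  have hne : 1 - (starRingEnd ℂ) (a k) * z ≠ 0 := den_ne (ha k) hz.le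
  have hane : (starRingEnd ℂ) (a k) ≠ 0 := by
    simp only [ne_eq, map_eq_zero]
    intro h
    have := ha2 k
    rw [h] at this
    simp at this
    linarith
  have h1 : HasDerivAt (fun w => 1 - (starRingEnd ℂ) (a k) * w) (-(starRingEnd ℂ) (a k)) z := by
    simpa using ((hasDerivAt_id z).const_mul ((starRingEnd ℂ) (a k))).const_sub 1
  have h2 : HasDerivAt (fun w => (1 - (starRingEnd ℂ) (a k) * w)⁻¹)
      (-(-(starRingEnd ℂ) (a k)) / (1 - (starRingEnd ℂ) (a k) * z)^2) z := h1.inv hne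
  have h3 : HasDerivAt (fun w => (1 - (starRingEnd ℂ) (a k) * w)⁻¹ - 1)
      ((starRingEnd ℂ) (a k) / (1 - (starRingEnd ℂ) (a k) * z)^2) z := by
    simpa using h2.sub_const 1
  have h4 := (h3.const_mul (((cc a k : ℝ) : ℂ) * ((starRingEnd ℂ) (a k))⁻¹))
  have : ((cc a k : ℝ) : ℂ) * ((starRingEnd ℂ) (a k))⁻¹
      * ((starRingEnd ℂ) (a k) / (1 - (starRingEnd ℂ) (a k) * z)^2) = TT' a k z := by
    unfold TT'
    rw [inv_pow]
    field_simp
  rw [this] at h4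
  have heq : (fun w => ((cc a k : ℝ) : ℂ) * ((starRingEnd ℂ) (a k))⁻¹
      * ((1 - (starRingEnd ℂ) (a k) * w)⁻¹ - 1)) = TT a k := by
    funext w
    unfold TT
    ring
  rw [heq] at h4
  exact h4

end basics

section two
variable {a : ℕ → ℂ}

lemma half_tsum : ∑' (k:ℕ), ((1:ℝ)/2)^(k+1) = 1 := by
  have h : ∀ k:ℕ, ((1:ℝ)/2)^(k+1) = ((1:ℝ)/2)^k * (1/2) := fun k => pow_succ _ _
  rw [tsum_congr h, tsum_mul_right, tsum_geometric_of_lt_one (by norm_num) (by norm_num)]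
  norm_num

lemma half_summable : Summable (fun k : ℕ => ((1:ℝ)/2)^(k+1)) := by
  apply Summable.mul_right
  exact summable_geometric_of_lt_one (by norm_num) (by norm_num)

lemma summable_TT'_norm (ha : ∀ n, Complex.abs (a n) < 1) {z : ℂ} (hz : Complex.abs z < 1) :
    Summable (fun k => ‖TT' a k z‖) := by
  apply Summable.of_nonneg_of_le (fun k => norm_nonneg _)
    (fun k => TT'_bound ha k hz (Complex.abs.nonneg z) (le_refl _))
  exact (half_summable.div_const _)

lemma summable_TT' (ha : ∀ n, Complex.abs (a n) < 1) {z : ℂ} (hz : Complex.abs z < 1) :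
    Summable (fun k => TT' a k z) :=
  (summable_TT'_norm ha hz).of_norm

lemma summable_TT (ha : ∀ n, Complex.abs (a n) < 1) (ha2 : ∀ n, 1/2 ≤ Complex.abs (a n))
    {z : ℂ} (hz : Complex.abs z ≤ 1) : Summable (fun k => TT a k z) := by
  apply Summable.of_norm
  apply Summable.of_nonneg_of_le (fun k => norm_nonneg _) (fun k => TT_bound ha ha2 k hz)
  exact half_summable.mul_left 4

lemma gg_bound (ha : ∀ n, Complex.abs (a n) < 1) (ha2 : ∀ n, 1/2 ≤ Complex.abs (a n))
    {z : ℂ} (hz : Complex.abs z ≤ 1) : Complex.abs (gg a z) ≤ 4 := by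
  have h1 : Complex.abs (gg a z) ≤ ∑' k, ‖TT a k z‖ := by
    rw [show Complex.abs (gg a z) = ‖gg a z‖ from rfl]
    unfold gg
    apply norm_tsum_le_tsum_norm
    apply Summable.of_nonneg_of_le (fun k => norm_nonneg _) (fun k => TT_bound ha ha2 k hz)
    exact half_summable.mul_left 4
  refine h1.trans ?_
  have h2 : ∑' k, ‖TT a k z‖ ≤ ∑' k, 4 * ((1:ℝ)/2)^(k+1) := by
    apply Summable.tsum_le_tsum (fun k => TT_bound ha ha2 k hz)
    · apply Summable.of_nonneg_of_le (fun k => norm_nonneg _) (fun k => TT_bound ha ha2 k hz)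
      exact half_summable.mul_left 4
    · exact half_summable.mul_left 4
  refine h2.trans ?_
  rw [tsum_mul_left, half_tsum]
  norm_num

lemma hasDerivAt_gg (ha : ∀ n, Complex.abs (a n) < 1) (ha2 : ∀ n, 1/2 ≤ Complex.abs (a n))
    {z : ℂ} (hz : Complex.abs z < 1) :
    HasDerivAt (gg a) (∑' k, TT' a k z) z := by
  set R : ℝ := (1 + Complex.abs z)/2 with hRdef
  have h0 := Complex.abs.nonneg z
  have hR1 : R < 1 := by rw [hRdef]; linarith
  have hR0 : 0 ≤ R := by rw [hRdef]; linarith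
  have hzR : Complex.abs z < R := by rw [hRdef]; linarith
  have hopen : IsOpen (Metric.ball (0:ℂ) R) := Metric.isOpen_ball
  have hmem : z ∈ Metric.ball (0:ℂ) R := by simpa using hzR
  have hball : ∀ x : ℂ, x ∈ Metric.ball (0:ℂ) R → Complex.abs x ≤ R := by
    intro x hx
    simpa using (le_of_lt (by simpa using hx))
  have htu : TendstoUniformlyOn (fun N x => ∑ k ∈ Finset.range N, TT' a k x)
      (fun x => ∑' k, TT' a k x) atTop (Metric.ball (0:ℂ) R) :=
    tendstoUniformlyOn_tsum_nat (half_summable.div_const ((1-R)^2))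
      (fun k x hx => TT'_bound ha k hR1 hR0 (hball x hx))
  have hd : ∀ᶠ N in atTop, ∀ x ∈ Metric.ball (0:ℂ) R,
      HasDerivAt (fun y => ∑ k ∈ Finset.range N, TT a k y)
        (∑ k ∈ Finset.range N, TT' a k x) x := by
    apply Filter.Eventually.of_forall
    intro N x hx
    apply HasDerivAt.fun_sum
    intro k _
    exact hasDerivAt_TT ha ha2 k (lt_of_le_of_lt (hball x hx) hR1)
  have hptw : ∀ x ∈ Metric.ball (0:ℂ) R,
      Tendsto (fun N => ∑ k ∈ Finset.range N, TT a k x) atTop (nhds (gg a x)) := by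
    intro x hx
    have hs := summable_TT ha ha2 (le_of_lt (lt_of_le_of_lt (hball x hx) hR1))
    exact hs.hasSum.tendsto_sum_nat
  exact hasDerivAt_of_tendstoUniformlyOn hopen htu hd hptw hmem

lemma deriv_gg (ha : ∀ n, Complex.abs (a n) < 1) (ha2 : ∀ n, 1/2 ≤ Complex.abs (a n))
    {z : ℂ} (hz : Complex.abs z < 1) :
    deriv (gg a) z = ∑' k, TT' a k z :=
  (hasDerivAt_gg ha ha2 hz).deriv

lemma continuousOn_hh (ha : ∀ n, Complex.abs (a n) < 1) {R : ℝ} (hR1 : R < 1) (hR0 : 0 ≤ R) :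
    ContinuousOn (fun z => ∑' k, TT' a k z) (Metric.closedBall (0:ℂ) R) := by
  have hball : ∀ x : ℂ, x ∈ Metric.closedBall (0:ℂ) R → Complex.abs x ≤ R := by
    intro x hx
    simpa using hx
  have htu : TendstoUniformlyOn (fun N x => ∑ k ∈ Finset.range N, TT' a k x)
      (fun x => ∑' k, TT' a k x) atTop (Metric.closedBall (0:ℂ) R) :=
    tendstoUniformlyOn_tsum_nat (half_summable.div_const ((1-R)^2))
      (fun k x hx => TT'_bound ha k hR1 hR0 (hball x hx))
  apply htu.continuousOn
  apply Filter.Frequently.of_forall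
  intro N
  apply continuousOn_finset_sum
  intro k _
  unfold TT'
  apply ContinuousOn.mul continuousOn_const
  apply ContinuousOn.pow
  apply ContinuousOn.inv₀
  · fun_prop
  · intro x hx
    exact den_ne (ha k) ((hball x hx).trans hR1.le)

end two
lemma poisson (w : ℂ) (hw : Complex.abs w < 1) :
    ∫ θ in (0:ℝ)..(2*π), (Complex.normSq (1 - w * Complex.exp (θ * Complex.I)))⁻¹
      = 2 * π / (1 - Complex.abs w ^ 2) := by
  have hden : ∀ z : ℂ, Complex.abs z ≤ 1 → 1 - w * z ≠ 0 := by
    intro z hz h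
    have h2 : Complex.abs (w * z) < 1 := by
      rw [map_mul]
      calc Complex.abs w * Complex.abs z ≤ Complex.abs w * 1 :=
            mul_le_mul_of_nonneg_left hz (Complex.abs.nonneg w)
        _ < 1 := by simpa using hw
    rw [sub_eq_zero] at h
    rw [← h] at h2; simp at h2
  have hD : DiffContOnCl ℂ (fun z => (1 - w * z)⁻¹) (Metric.ball (0:ℂ) 1) := by
    constructor
    · apply DifferentiableOn.inv
      · fun_prop
      · intro x hx
        exact hden x (le_of_lt (by simpa using hx))
    · rw [closure_ball (0:ℂ) one_ne_zero]
      apply ContinuousOn.inv₀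
      · fun_prop
      · intro x hx
        exact hden x (by simpa using hx)
  have hwmem : (starRingEnd ℂ) w ∈ Metric.ball (0:ℂ) 1 := by simpa using hw
  have key := hD.circleIntegral_sub_inv_smul hwmem
  rw [smul_eq_mul] at key
  have h2 : (∫ θ in (0:ℝ)..(2*π),
      (I * ((Complex.normSq (1 - w * Complex.exp (θ * Complex.I)))⁻¹ : ℝ) : ℂ))
      = (2 * ↑π * I) * (1 - w * (starRingEnd ℂ) w)⁻¹ := by
    rw [← key, circleIntegral]
    apply intervalIntegral.integral_congr
    intro θ _
    simp only [deriv_circleMap, circleMap, Complex.ofReal_one, one_mul, zero_add, smul_eq_mul]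
    have hene : Complex.exp (θ * I) ≠ 0 := Complex.exp_ne_zero _
    have habs : Complex.abs (Complex.exp (θ * I)) = 1 := by
      simp [Complex.abs_exp]
    have hu : (1 : ℂ) - w * Complex.exp (θ * I) ≠ 0 := hden _ (le_of_eq habs)
    have hcu : (starRingEnd ℂ) (1 - w * Complex.exp (θ * I)) ≠ 0 := star_ne_zero.mpr hu
    have hfac : Complex.exp (θ * I) - (starRingEnd ℂ) w
        = Complex.exp (θ * I) * (starRingEnd ℂ) (1 - w * Complex.exp (θ * I)) := by
      rw [map_sub, map_mul, map_one]
      have h5 : (starRingEnd ℂ) (Complex.exp (θ * I)) = (Complex.exp (θ * I))⁻¹ := by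
        rw [← Complex.exp_conj]
        simp [Complex.exp_neg]
      rw [h5]
      field_simp
    rw [hfac, mul_inv, Complex.ofReal_inv, Complex.normSq_eq_conj_mul_self]
    generalize (starRingEnd ℂ) (1 - w * Complex.exp (↑θ * I)) = v at hcu ⊢
    generalize (1:ℂ) - w * Complex.exp (↑θ * I) = u at hu ⊢
    generalize Complex.exp (↑θ * I) = e at hene ⊢
    field_simp
  rw [intervalIntegral.integral_const_mul, intervalIntegral.integral_ofReal] at h2
  have hI : (I : ℂ) ≠ 0 := Complex.I_ne_zero
  have h3 : ((∫ θ in (0:ℝ)..(2*π),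
      (Complex.normSq (1 - w * Complex.exp (θ * Complex.I)))⁻¹ : ℝ) : ℂ)
      = ((2 * π / (1 - Complex.abs w ^ 2) : ℝ) : ℂ) := by
    have hmc : w * (starRingEnd ℂ) w = ((Complex.abs w ^ 2 : ℝ) : ℂ) := by
      rw [Complex.mul_conj, Complex.normSq_eq_abs]
    have hne : (1 : ℝ) - Complex.abs w ^ 2 ≠ 0 := by nlinarith [Complex.abs.nonneg w]
    apply mul_left_cancel₀ hI
    rw [h2, hmc]
    have hne' : ((1:ℂ) - ((Complex.abs w ^ 2 : ℝ) : ℂ)) ≠ 0 := by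
      rw [show (1:ℂ) - ((Complex.abs w ^ 2 : ℝ) : ℂ) = ((1 - Complex.abs w ^ 2 : ℝ) : ℂ) by
        push_cast; ring, Complex.ofReal_ne_zero]
      exact hne
    push_cast
    field_simp
  exact_mod_cast h3

section three
variable {a : ℕ → ℂ}

lemma gamma_abs {r : ℝ} (hr0 : 0 < r) (θ : ℝ) :
    Complex.abs ((r:ℂ) * Complex.exp (θ * Complex.I)) = r := by
  rw [map_mul, Complex.abs_ofReal, Complex.abs_exp]
  simp [abs_of_pos hr0]

lemma cont_TT'_circle (ha : ∀ n, Complex.abs (a n) < 1) (k : ℕ) {r : ℝ}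
    (hr0 : 0 < r) (hr1 : r < 1) :
    Continuous (fun θ : ℝ => Complex.abs (TT' a k ((r:ℂ) * Complex.exp (θ * Complex.I)))) := by
  have hγ : Continuous (fun θ : ℝ => (r:ℂ) * Complex.exp (θ * Complex.I)) := by fun_prop
  apply Complex.continuous_abs.comp
  unfold TT'
  apply Continuous.mul continuous_const
  apply Continuous.pow
  apply Continuous.inv₀
  · fun_prop
  · intro θ
    exact den_ne (ha k) (le_of_lt (by rw [gamma_abs hr0 θ]; exact hr1))

lemma integral_TT' (ha : ∀ n, Complex.abs (a n) < 1) (k : ℕ) {r : ℝ}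
    (hr0 : 0 < r) (hr1 : r < 1) :
    ∫ θ in (0:ℝ)..(2*π), Complex.abs (TT' a k ((r:ℂ) * Complex.exp (θ * Complex.I)))
      = cc a k * (2*π / (1 - (Complex.abs (a k) * r)^2)) := by
  set w : ℂ := (starRingEnd ℂ) (a k) * (r:ℂ) with hw
  have hwabs : Complex.abs w = Complex.abs (a k) * r := by
    rw [hw, map_mul, Complex.abs_conj, Complex.abs_ofReal, abs_of_pos hr0]
  have hw1 : Complex.abs w < 1 := by
    rw [hwabs]
    nlinarith [Complex.abs.nonneg (a k), ha k]
  have hpt : ∀ θ : ℝ, Complex.abs (TT' a k ((r:ℂ) * Complex.exp (θ * Complex.I)))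
      = cc a k * (Complex.normSq (1 - w * Complex.exp (θ * Complex.I)))⁻¹ := by
    intro θ
    have harg : (starRingEnd ℂ) (a k) * ((r:ℂ) * Complex.exp (θ * Complex.I))
        = w * Complex.exp (θ * Complex.I) := by rw [hw]; ring
    unfold TT'
    rw [harg, map_mul, map_pow, map_inv₀, Complex.abs_ofReal,
      abs_of_pos (cc_pos ha k), inv_pow, Complex.sq_abs]
  rw [intervalIntegral.integral_congr (fun θ _ => hpt θ),
    intervalIntegral.integral_const_mul, poisson w hw1, hwabs]

lemma integral_TT'_le (ha : ∀ n, Complex.abs (a n) < 1) (k : ℕ) {r : ℝ}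
    (hr0 : 0 < r) (hr1 : r < 1) :
    ∫ θ in (0:ℝ)..(2*π), Complex.abs (TT' a k ((r:ℂ) * Complex.exp (θ * Complex.I)))
      ≤ 2*π * (1/2)^(k+1) := by
  rw [integral_TT' ha k hr0 hr1]
  have hb := Complex.abs.nonneg (a k)
  have hb1 := ha k
  have hd1 : 0 < 1 - Complex.abs (a k) := by linarith
  have h7 : 0 ≤ Complex.abs (a k) * r := by positivity
  have h8 : Complex.abs (a k) * r ≤ Complex.abs (a k) := by nlinarith
  have h9 : (Complex.abs (a k) * r)^2 ≤ Complex.abs (a k)^2 := by nlinarith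
  have hd2 : 1 - Complex.abs (a k) ≤ 1 - (Complex.abs (a k) * r)^2 := by nlinarith
  have hd3 : (0:ℝ) < 1 - (Complex.abs (a k) * r)^2 := lt_of_lt_of_le hd1 hd2
  unfold cc
  rw [div_eq_mul_inv]
  have h5 : (1 - Complex.abs (a k)) * (2*π * (1 - (Complex.abs (a k) * r)^2)⁻¹) ≤ 2*π := by
    rw [show (1 - Complex.abs (a k)) * (2*π * (1 - (Complex.abs (a k) * r)^2)⁻¹)
      = 2*π * ((1 - Complex.abs (a k)) * (1 - (Complex.abs (a k) * r)^2)⁻¹) by ring]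
    have h6 : (1 - Complex.abs (a k)) * (1 - (Complex.abs (a k) * r)^2)⁻¹ ≤ 1 := by
      rw [← div_eq_mul_inv, div_le_one hd3]
      exact hd2
    nlinarith [Real.pi_pos]
  calc (1/2)^(k+1) * (1 - Complex.abs (a k)) * (2*π * (1 - (Complex.abs (a k) * r)^2)⁻¹)
      = (1/2)^(k+1) * ((1 - Complex.abs (a k)) * (2*π * (1 - (Complex.abs (a k) * r)^2)⁻¹)) := by
        ring
    _ ≤ (1/2)^(k+1) * (2*π) := by
        apply mul_le_mul_of_nonneg_left h5 (by positivity)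
    _ = 2*π * (1/2)^(k+1) := by ring

end three

section four
variable {a : ℕ → ℂ}

lemma cont_hh_circle (ha : ∀ n, Complex.abs (a n) < 1) {r : ℝ} (hr0 : 0 < r) (hr1 : r < 1) :
    Continuous (fun θ : ℝ => Complex.abs ((fun z => ∑' k, TT' a k z)
      ((r:ℂ) * Complex.exp (θ * Complex.I)))) := by
  apply Complex.continuous_abs.comp
  have hγ : Continuous (fun θ : ℝ => (r:ℂ) * Complex.exp (θ * Complex.I)) := by fun_prop
  apply (continuousOn_hh ha hr1 hr0.le).comp_continuous hγ
  intro θ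
  simpa [Metric.mem_closedBall, Complex.dist_eq] using le_of_eq (gamma_abs hr0 θ)

lemma tail_bound (ha : ∀ n, Complex.abs (a n) < 1) (N : ℕ) {z : ℂ} (hz : Complex.abs z < 1)
    (hz0 : 0 ≤ Complex.abs z) :
    Complex.abs ((∑' k, TT' a k z) - ∑ k ∈ Finset.range N, TT' a k z)
      ≤ (1/2)^N / (1 - Complex.abs z)^2 := by
  have hsum := summable_TT' ha hz
  have hdecomp := Summable.sum_add_tsum_nat_add (f := fun k => TT' a k z) N hsum
  have h1 : (∑' k, TT' a k z) - ∑ k ∈ Finset.range N, TT' a k z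
      = ∑' k, TT' a (k + N) z := by
    rw [← hdecomp]; ring
  rw [h1]
  have hsn : Summable (fun k => ‖TT' a (k + N) z‖) :=
    ((summable_TT'_norm ha hz).comp_injective (add_left_injective N))
  have h2 : Complex.abs (∑' k, TT' a (k + N) z) ≤ ∑' k, ‖TT' a (k + N) z‖ := by
    rw [show Complex.abs (∑' k, TT' a (k + N) z) = ‖∑' k, TT' a (k + N) z‖ from rfl]
    exact norm_tsum_le_tsum_norm hsn
  refine h2.trans ?_
  have hb : ∀ k : ℕ, ‖TT' a (k + N) z‖ ≤ (1/2)^(k+1) * ((1/2)^N / (1 - Complex.abs z)^2) := by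
    intro k
    refine (TT'_bound ha (k+N) hz hz0 (le_refl _)).trans ?_
    apply le_of_eq
    have hne : (1 - Complex.abs z) ≠ 0 := by
      intro h; rw [sub_eq_zero] at h; rw [← h] at hz; simp at hz
    field_simp
    ring
  have h3 : ∑' k, ‖TT' a (k + N) z‖
      ≤ ∑' (k:ℕ), (1/2:ℝ)^(k+1) * ((1/2)^N / (1 - Complex.abs z)^2) := by
    apply Summable.tsum_le_tsum hb hsn
    exact half_summable.mul_right _
  refine h3.trans ?_
  rw [tsum_mul_right, half_tsum, one_mul]

lemma integral_hh_le (ha : ∀ n, Complex.abs (a n) < 1) {r : ℝ} (hr0 : 0 < r) (hr1 : r < 1) :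
    ∫ θ in (0:ℝ)..(2*π), Complex.abs ((fun z => ∑' k, TT' a k z)
      ((r:ℂ) * Complex.exp (θ * Complex.I))) ≤ 2*π + 1 := by
  have h2pi := Real.two_pi_pos
  have key : ∀ N : ℕ, ∫ θ in (0:ℝ)..(2*π), Complex.abs ((fun z => ∑' k, TT' a k z)
      ((r:ℂ) * Complex.exp (θ * Complex.I)))
      ≤ 2*π + ((1/2)^N / (1 - r)^2) * (2*π) := by
    intro N
    have hint1 : IntervalIntegrable (fun θ : ℝ => Complex.abs ((fun z => ∑' k, TT' a k z)
        ((r:ℂ) * Complex.exp (θ * Complex.I)))) MeasureTheory.volume 0 (2*π) :=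
      (cont_hh_circle ha hr0 hr1).intervalIntegrable 0 (2*π)
    have hintk : ∀ k : ℕ, IntervalIntegrable (fun θ : ℝ =>
        Complex.abs (TT' a k ((r:ℂ) * Complex.exp (θ * Complex.I))))
        MeasureTheory.volume 0 (2*π) :=
      fun k => (cont_TT'_circle ha k hr0 hr1).intervalIntegrable 0 (2*π)
    have hcS : Continuous (fun θ : ℝ => ∑ k ∈ Finset.range N,
        Complex.abs (TT' a k ((r:ℂ) * Complex.exp (θ * Complex.I)))) :=
      continuous_finset_sum _ (fun k _ => cont_TT'_circle ha k hr0 hr1)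
    have hintS : IntervalIntegrable (fun θ : ℝ => (∑ k ∈ Finset.range N,
        Complex.abs (TT' a k ((r:ℂ) * Complex.exp (θ * Complex.I))))
        + (1/2)^N / (1 - r)^2) MeasureTheory.volume 0 (2*π) :=
      (hcS.add continuous_const).intervalIntegrable 0 (2*π)
    have hptw : ∀ θ ∈ Set.Icc (0:ℝ) (2*π),
        Complex.abs ((fun z => ∑' k, TT' a k z) ((r:ℂ) * Complex.exp (θ * Complex.I)))
        ≤ (∑ k ∈ Finset.range N,
            Complex.abs (TT' a k ((r:ℂ) * Complex.exp (θ * Complex.I))))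
          + (1/2)^N / (1 - r)^2 := by
      intro θ _
      set z := (r:ℂ) * Complex.exp (θ * Complex.I) with hzdef
      have hza : Complex.abs z = r := gamma_abs hr0 θ
      have hz1 : Complex.abs z < 1 := by rw [hza]; exact hr1
      have htri : Complex.abs (∑' k, TT' a k z)
          ≤ Complex.abs (∑ k ∈ Finset.range N, TT' a k z)
            + Complex.abs ((∑' k, TT' a k z) - ∑ k ∈ Finset.range N, TT' a k z) := by
        calc Complex.abs (∑' k, TT' a k z)
            = Complex.abs ((∑ k ∈ Finset.range N, TT' a k z)
              + ((∑' k, TT' a k z) - ∑ k ∈ Finset.range N, TT' a k z)) := by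
              rw [add_comm, sub_add_cancel]
          _ ≤ _ := Complex.abs.add_le _ _
      refine htri.trans ?_
      have hA : Complex.abs (∑ k ∈ Finset.range N, TT' a k z)
          ≤ ∑ k ∈ Finset.range N, Complex.abs (TT' a k z) := by
        exact Complex.abs.sum_le _ _
      have hB := tail_bound ha N hz1 (Complex.abs.nonneg z)
      rw [hza] at hB
      exact add_le_add hA hB
    have hmono := intervalIntegral.integral_mono_on h2pi.le hint1 hintS hptw
    refine hmono.trans ?_
    rw [intervalIntegral.integral_add (hcS.intervalIntegrable 0 (2*π))
      intervalIntegrable_const]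
    rw [intervalIntegral.integral_finset_sum (fun k _ => hintk k)]
    rw [intervalIntegral.integral_const]
    have hS : ∑ k ∈ Finset.range N, ∫ θ in (0:ℝ)..(2*π),
        Complex.abs (TT' a k ((r:ℂ) * Complex.exp (θ * Complex.I))) ≤ 2*π := by
      have h1 : ∑ k ∈ Finset.range N, ∫ θ in (0:ℝ)..(2*π),
          Complex.abs (TT' a k ((r:ℂ) * Complex.exp (θ * Complex.I)))
          ≤ ∑ k ∈ Finset.range N, 2*π * (1/2)^(k+1) :=
        Finset.sum_le_sum (fun k _ => integral_TT'_le ha k hr0 hr1)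
      refine h1.trans ?_
      have h2 : ∑ k ∈ Finset.range N, 2*π * ((1:ℝ)/2)^(k+1)
          ≤ ∑' (k:ℕ), 2*π * ((1:ℝ)/2)^(k+1) := by
        apply Summable.sum_le_tsum
        · intro k _; positivity
        · exact half_summable.mul_left _
      refine h2.trans ?_
      rw [tsum_mul_left, half_tsum]
      simp
    have : (2*π - 0) • ((1/2:ℝ)^N / (1 - r)^2) = ((1/2)^N / (1 - r)^2) * (2*π) := by
      simp [smul_eq_mul]; ring
    rw [this]
    linarith
  apply le_of_forall_pos_le_add
  intro ε hε
  have h1r : (0:ℝ) < 1 - r := by linarith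
  have hr2 : (0:ℝ) < (1 - r)^2 := pow_pos h1r 2
  obtain ⟨N, hN⟩ := exists_pow_lt_of_lt_one
    (show (0:ℝ) < ε * (1-r)^2 / (2*π) from div_pos (mul_pos hε hr2) h2pi)
    (show (1:ℝ)/2 < 1 by norm_num)
  have hN2 : ((1/2:ℝ)^N / (1 - r)^2) * (2*π) < ε := by
    rw [div_mul_eq_mul_div, div_lt_iff₀ hr2]
    calc (1/2:ℝ)^N * (2*π) < (ε * (1-r)^2 / (2*π)) * (2*π) := by
          apply mul_lt_mul_of_pos_right hN h2pi
      _ = ε * (1-r)^2 := by field_simp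
  refine (key N).trans ?_
  linarith

end four

section five
variable {a : ℕ → ℂ}

lemma main_term_lb (ha : ∀ n, Complex.abs (a n) < 1) (n : ℕ) :
    ((1:ℝ)/2)^(n+2) ≤ (1 - Complex.abs (a n)^2) * Complex.abs (TT' a n (a n)) := by
  set ρ := Complex.abs (a n) with hρ
  have hρ1 : ρ < 1 := ha n
  have hρ0 : (0:ℝ) ≤ ρ := Complex.abs.nonneg _
  have h1ρ2 : (0:ℝ) < 1 - ρ^2 := by nlinarith
  have hcm : (starRingEnd ℂ) (a n) * (a n) = ((Complex.normSq (a n) : ℝ) : ℂ) := by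
    rw [mul_comm, Complex.mul_conj]
  have h1 : (1:ℂ) - (starRingEnd ℂ) (a n) * (a n) = (((1 - ρ^2 : ℝ)) : ℂ) := by
    rw [hcm, hρ, ← Complex.sq_abs]
    push_cast
    ring
  have habs : Complex.abs (TT' a n (a n)) = cc a n * ((1 - ρ^2)⁻¹)^2 := by
    unfold TT'
    rw [h1, map_mul, Complex.abs_ofReal, abs_of_pos (cc_pos ha n), map_pow, map_inv₀,
      Complex.abs_ofReal, abs_of_pos h1ρ2]
  rw [habs]
  have hccn : cc a n = (1/2)^(n+1) * (1 - ρ) := rfl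
  have heq : (1 - ρ^2) * (cc a n * ((1 - ρ^2)⁻¹)^2) = cc a n * (1 - ρ^2)⁻¹ := by
    field_simp
  rw [heq, hccn]
  have h2 : (1 - ρ^2)⁻¹ = ((1-ρ)*(1+ρ))⁻¹ := by ring_nf
  rw [h2, mul_inv]
  have h1ρ : (0:ℝ) < 1 - ρ := by linarith
  rw [show (1/2:ℝ)^(n+1) * (1-ρ) * ((1-ρ)⁻¹ * (1+ρ)⁻¹)
    = (1/2)^(n+1) * ((1-ρ) * (1-ρ)⁻¹) * (1+ρ)⁻¹ by ring, mul_inv_cancel₀ (ne_of_gt h1ρ),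
    mul_one]
  have h3 : (1+ρ)⁻¹ ≥ (1/2 : ℝ) := by
    rw [ge_iff_le, le_inv_comm₀ (by norm_num) (by linarith)]
    · linarith
  calc ((1:ℝ)/2)^(n+2) = (1/2)^(n+1) * (1/2) := by ring
    _ ≤ (1/2)^(n+1) * (1+ρ)⁻¹ := by
        apply mul_le_mul_of_nonneg_left h3 (by positivity)

lemma cross_term_ub (ha : ∀ n, Complex.abs (a n) < 1)
    (ha3 : ∀ k n, k < n → 1 - Complex.abs (a n) ≤ (1/1024)^n * (1 - Complex.abs (a k)))
    (n k : ℕ) (hkn : k ≠ n) :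
    (1 - Complex.abs (a n)^2) * Complex.abs (TT' a k (a n))
      ≤ (1/2)^k * (1/1024)^(max k n) := by
  set ρ := Complex.abs (a n) with hρ
  set σ := Complex.abs (a k) with hσ
  have hρ1 : ρ < 1 := ha n
  have hρ0 : (0:ℝ) ≤ ρ := Complex.abs.nonneg _
  have hσ1 : σ < 1 := ha k
  have hσ0 : (0:ℝ) ≤ σ := Complex.abs.nonneg _
  have h1ρ : (0:ℝ) < 1 - ρ := by linarith
  have h1σ : (0:ℝ) < 1 - σ := by linarith
  set D := Complex.abs (1 - (starRingEnd ℂ) (a k) * (a n)) with hD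
  have hDlb : 1 - σ * ρ ≤ D := by
    rw [hD, hσ, hρ]
    exact den_lb (a k) (a n)
  have hD1 : 1 - σ ≤ D := le_trans (by nlinarith) hDlb
  have hD2 : 1 - ρ ≤ D := le_trans (by nlinarith) hDlb
  have hDpos : (0:ℝ) < D := lt_of_lt_of_le h1σ hD1
  have habs : Complex.abs (TT' a k (a n)) = cc a k * ((D)⁻¹)^2 := by
    unfold TT'
    rw [map_mul, Complex.abs_ofReal, abs_of_pos (cc_pos ha k), map_pow, map_inv₀, ← hD]
  rw [habs]
  have hcck : cc a k = (1/2)^(k+1) * (1 - σ) := rfl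
  rcases lt_or_gt_of_ne hkn with hlt | hgt
  · -- k < n : use D ≥ 1 - σ, and 1 - ρ ≤ (1/1024)^n (1 - σ)
    have hmax : max k n = n := max_eq_right hlt.le
    rw [hmax]
    have h3 := ha3 k n hlt
    have hfrac : ((D)⁻¹)^2 ≤ ((1-σ)⁻¹)^2 := by
      apply pow_le_pow_left₀ (by positivity)
      exact inv_anti₀ h1σ hD1
    have hle1 : (1 - ρ^2) * (cc a k * ((D)⁻¹)^2)
        ≤ (1 - ρ^2) * (cc a k * ((1-σ)⁻¹)^2) := by
      apply mul_le_mul_of_nonneg_left _ (by nlinarith)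
      apply mul_le_mul_of_nonneg_left hfrac (cc_pos ha k).le
    refine hle1.trans ?_
    rw [hcck]
    have heq : (1 - ρ^2) * ((1/2)^(k+1) * (1 - σ) * ((1-σ)⁻¹)^2)
        = (1/2)^(k+1) * ((1+ρ) * ((1-ρ) * (1-σ)⁻¹)) := by
      field_simp
      ring
    rw [heq]
    have h4 : (1-ρ) * (1-σ)⁻¹ ≤ (1/1024)^n := by
      rw [← div_eq_mul_inv, div_le_iff₀ h1σ]
      linarith [h3]
    have h5 : (1+ρ) * ((1-ρ) * (1-σ)⁻¹) ≤ 2 * (1/1024)^n := by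
      have hnn : (0:ℝ) ≤ (1-ρ) * (1-σ)⁻¹ := by positivity
      nlinarith [pow_pos (show (0:ℝ) < 1/1024 by norm_num) n]
    calc (1/2:ℝ)^(k+1) * ((1+ρ) * ((1-ρ) * (1-σ)⁻¹))
        ≤ (1/2)^(k+1) * (2 * (1/1024)^n) := by
          apply mul_le_mul_of_nonneg_left h5 (by positivity)
      _ = (1/2)^k * (1/1024)^n := by ring
  · -- k > n : use D ≥ 1 - ρ, and 1 - σ ≤ (1/1024)^k (1 - ρ)
    have hmax : max k n = k := max_eq_left hgt.le
    rw [hmax]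
    have h3 := ha3 n k hgt
    rw [← hσ, ← hρ] at h3
    have hfrac : ((D)⁻¹)^2 ≤ ((1-ρ)⁻¹)^2 := by
      apply pow_le_pow_left₀ (by positivity)
      exact inv_anti₀ h1ρ hD2
    have hle1 : (1 - ρ^2) * (cc a k * ((D)⁻¹)^2)
        ≤ (1 - ρ^2) * (cc a k * ((1-ρ)⁻¹)^2) := by
      apply mul_le_mul_of_nonneg_left _ (by nlinarith)
      apply mul_le_mul_of_nonneg_left hfrac (cc_pos ha k).le
    refine hle1.trans ?_
    rw [hcck]
    have heq : (1 - ρ^2) * ((1/2)^(k+1) * (1 - σ) * ((1-ρ)⁻¹)^2)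
        = (1/2)^(k+1) * ((1+ρ) * ((1-σ) * (1-ρ)⁻¹)) := by
      field_simp
      ring
    rw [heq]
    have h4 : (1-σ) * (1-ρ)⁻¹ ≤ (1/1024)^k := by
      rw [← div_eq_mul_inv, div_le_iff₀ h1ρ]
      linarith [h3]
    have h5 : (1+ρ) * ((1-σ) * (1-ρ)⁻¹) ≤ 2 * (1/1024)^k := by
      have hnn : (0:ℝ) ≤ (1-σ) * (1-ρ)⁻¹ := by positivity
      nlinarith [pow_pos (show (0:ℝ) < 1/1024 by norm_num) k]
    calc (1/2:ℝ)^(k+1) * ((1+ρ) * ((1-σ) * (1-ρ)⁻¹))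
        ≤ (1/2)^(k+1) * (2 * (1/1024)^k) := by
          apply mul_le_mul_of_nonneg_left h5 (by positivity)
      _ = (1/2)^k * (1/1024)^k := by ring

end five

section six
variable {a : ℕ → ℂ}

lemma beta_summable (n : ℕ) :
    Summable (fun k : ℕ => if k = n then (0:ℝ) else (1/2)^k * (1/1024)^(max k n)) := by
  refine Summable.of_nonneg_of_le (fun k => ?_) (fun k => ?_)
    (summable_geometric_of_lt_one (show (0:ℝ) ≤ 1/2 by norm_num) (by norm_num))
  · by_cases h : k = n
    · simp [h]
    · simp only [h, if_false]
      positivity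
  · by_cases h : k = n
    · simp only [h, if_pos rfl]
      positivity
    · simp only [h, if_false]
      have h1 : ((1:ℝ)/1024)^(max k n) ≤ 1 := by
        apply pow_le_one₀ (by norm_num) (by norm_num)
      nlinarith [pow_pos (show (0:ℝ) < 1/2 by norm_num) k,
        pow_nonneg (show (0:ℝ) ≤ 1/1024 by norm_num) (max k n)]

lemma beta_tsum_le (n : ℕ) :
    ∑' k : ℕ, (if k = n then (0:ℝ) else (1/2)^k * (1/1024)^(max k n)) ≤ (1/2)^(n+3) := by
  set β := fun k : ℕ => if k = n then (0:ℝ) else (1/2)^k * (1/1024)^(max k n) with hβ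
  have hsum := beta_summable n
  rw [← Summable.sum_add_tsum_nat_add (f := β) (n+1) hsum]
  have hpart1 : ∑ k ∈ Finset.range (n+1), β k ≤ (1/2)^n * (1/16) := by
    rcases Nat.eq_zero_or_pos n with hn0 | hnpos
    · subst hn0
      simp [hβ]
    · have hterm : ∀ k ∈ Finset.range (n+1), β k ≤ (1/2)^k * (1/1024)^n := by
        intro k hk
        rw [Finset.mem_range] at hk
        by_cases h : k = n
        · have hz : β k = 0 := by simp [hβ, h]
          rw [hz]
          positivity
        · have hkn : k < n := lt_of_le_of_ne (Nat.lt_succ_iff.mp hk) h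
          have : max k n = n := max_eq_right hkn.le
          simp only [hβ, h, if_false, this]
          exact le_refl _
      refine (Finset.sum_le_sum hterm).trans ?_
      have h2 : ∑ k ∈ Finset.range (n+1), ((1:ℝ)/2)^k * (1/1024)^n
          = (∑ k ∈ Finset.range (n+1), ((1:ℝ)/2)^k) * (1/1024)^n := by
        rw [← Finset.sum_mul]
      rw [h2]
      have h3 : ∑ k ∈ Finset.range (n+1), ((1:ℝ)/2)^k ≤ 2 := by
        have := Summable.sum_le_tsum (Finset.range (n+1))
          (fun k _ => pow_nonneg (show (0:ℝ) ≤ 1/2 by norm_num) k)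
          (summable_geometric_of_lt_one (show (0:ℝ) ≤ 1/2 by norm_num) (by norm_num))
        rw [tsum_geometric_of_lt_one (by norm_num) (by norm_num)] at this
        refine this.trans ?_
        norm_num
      have h4 : ((1:ℝ)/1024)^n ≤ (1/1024) * (1/512)^(n-1) * (1/2)^(n-1) := by
        apply le_of_eq
        have hn1 : n - 1 + 1 = n := by omega
        calc ((1:ℝ)/1024)^n = (1/1024)^(n-1+1) := by rw [hn1]
          _ = (1/1024)^(n-1) * (1/1024) := pow_succ _ _
          _ = (1/1024) * (((1:ℝ)/512) * (1/2))^(n-1) := by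
              rw [show ((1:ℝ)/512) * (1/2) = 1/1024 by norm_num]; ring
          _ = (1/1024) * ((1/512)^(n-1) * (1/2)^(n-1)) := by rw [mul_pow]
          _ = (1/1024) * (1/512)^(n-1) * (1/2)^(n-1) := by ring
      have h5 : ((1:ℝ)/512)^(n-1) ≤ 1 := pow_le_one₀ (by norm_num) (by norm_num)
      have h6 : ((1:ℝ)/2)^(n-1) = (1/2)^n * 2 := by
        have hn1 : n = (n-1) + 1 := by omega
        nth_rewrite 2 [hn1]
        rw [pow_succ]
        ring
      have hp2 : (0:ℝ) < (1/2)^n := by positivity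
      have hp512 : (0:ℝ) ≤ (1/512:ℝ)^(n-1) := by positivity
      have hp2' : (0:ℝ) ≤ (1/2:ℝ)^(n-1) := by positivity
      calc (∑ k ∈ Finset.range (n+1), ((1:ℝ)/2)^k) * (1/1024)^n
          ≤ 2 * (1/1024:ℝ)^n := by
            apply mul_le_mul_of_nonneg_right h3 (by positivity)
        _ ≤ 2 * ((1/1024) * (1/512)^(n-1) * (1/2)^(n-1)) := by
            apply mul_le_mul_of_nonneg_left h4 (by norm_num)
        _ ≤ 2 * ((1/1024) * 1 * (1/2)^(n-1)) := by
            apply mul_le_mul_of_nonneg_left _ (by norm_num)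
            apply mul_le_mul_of_nonneg_right _ hp2'
            apply mul_le_mul_of_nonneg_left h5 (by norm_num)
        _ = (1/512) * ((1/2)^n * 2) := by rw [h6]; ring
        _ ≤ (1/2)^n * (1/16) := by nlinarith
  have hpart2 : ∑' k : ℕ, β (k + (n+1)) ≤ (1/2)^n * (1/16) := by
    have hterm : ∀ k : ℕ, β (k + (n+1)) = ((1:ℝ)/2048)^(k + n + 1) := by
      intro k
      have h1 : k + (n+1) ≠ n := by omega
      have h2 : max (k + (n+1)) n = k + n + 1 := by
        rw [max_eq_left (by omega)]
        omega
      simp only [hβ, h1, if_false, h2]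
      rw [show k + (n+1) = k + n + 1 by omega]
      rw [show ((1:ℝ)/2048) = (1/2) * (1/1024) by norm_num, mul_pow]
    rw [tsum_congr hterm]
    have h3 : ∀ k : ℕ, ((1:ℝ)/2048)^(k + n + 1) = (1/2048)^(n+1) * (1/2048)^k := by
      intro k; rw [show k + n + 1 = (n+1) + k by omega, pow_add]
    rw [tsum_congr h3, tsum_mul_left,
      tsum_geometric_of_lt_one (by norm_num) (by norm_num)]
    have h4 : ((1:ℝ) - 1/2048)⁻¹ ≤ 2 := by
      rw [inv_le_comm₀ (by norm_num) (by norm_num)]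
      norm_num
    have h5 : ((1:ℝ)/2048)^(n+1) ≤ (1/2)^n * (1/32) := by
      rw [pow_succ]
      have h6 : ((1:ℝ)/2048)^n ≤ (1/2)^n := by
        apply pow_le_pow_left₀ (by norm_num) (by norm_num)
      nlinarith [pow_pos (show (0:ℝ) < 1/2 by norm_num) n,
        pow_nonneg (show (0:ℝ) ≤ 1/2048 by norm_num) n]
    calc ((1:ℝ)/2048)^(n+1) * (1 - 1/2048)⁻¹ ≤ ((1/2)^n * (1/32)) * 2 := by
          apply mul_le_mul h5 h4 (by norm_num) (by positivity)
      _ = (1/2)^n * (1/16) := by ring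
  calc ∑ k ∈ Finset.range (n+1), β k + ∑' k : ℕ, β (k + (n+1))
      ≤ (1/2)^n * (1/16) + (1/2)^n * (1/16) := add_le_add hpart1 hpart2
    _ = (1/2)^(n+3) := by ring

lemma hh_lower (ha : ∀ n, Complex.abs (a n) < 1) (ha2 : ∀ n, 1/2 ≤ Complex.abs (a n))
    (ha3 : ∀ k n, k < n → 1 - Complex.abs (a n) ≤ (1/1024)^n * (1 - Complex.abs (a k)))
    (n : ℕ) :
    ((1:ℝ)/2)^(n+3) ≤ (1 - Complex.abs (a n)^2) * Complex.abs (∑' k, TT' a k (a n)) := by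
  classical
  have hρ1 : Complex.abs (a n) < 1 := ha n
  have hρ0 : (0:ℝ) ≤ Complex.abs (a n) := Complex.abs.nonneg _
  have h1ρ2 : (0:ℝ) < 1 - Complex.abs (a n)^2 := by nlinarith
  have hsum := summable_TT' ha (z := a n) hρ1
  have hdecomp := Summable.tsum_eq_add_tsum_ite hsum n
  set rest := ∑' k, (if k = n then (0:ℂ) else TT' a k (a n)) with hrest
  have habs1 : Complex.abs (TT' a n (a n))
      ≤ Complex.abs (∑' k, TT' a k (a n)) + Complex.abs rest := by
    have : TT' a n (a n) = (∑' k, TT' a k (a n)) - rest := by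
      rw [hdecomp]; ring
    rw [this]
    exact (Complex.abs.sub_le_add _ _)
  -- bound on rest
  have hsumnorm : Summable (fun k => ‖(if k = n then (0:ℂ) else TT' a k (a n))‖) := by
    refine Summable.of_nonneg_of_le (fun k => norm_nonneg _) (fun k => ?_)
      (summable_TT'_norm ha (z := a n) hρ1)
    by_cases h : k = n <;> simp [h]
  have hrest1 : Complex.abs rest ≤ ∑' k, ‖(if k = n then (0:ℂ) else TT' a k (a n))‖ := by
    rw [hrest, show ∀ w : ℂ, Complex.abs w = ‖w‖ from fun _ => rfl]
    exact norm_tsum_le_tsum_norm hsumnorm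
  have hrest2 : (1 - Complex.abs (a n)^2) * Complex.abs rest ≤ (1/2)^(n+3) := by
    have h1 : (1 - Complex.abs (a n)^2) * Complex.abs rest
        ≤ (1 - Complex.abs (a n)^2) * ∑' k, ‖(if k = n then (0:ℂ) else TT' a k (a n))‖ :=
      mul_le_mul_of_nonneg_left hrest1 h1ρ2.le
    refine h1.trans ?_
    rw [← tsum_mul_left]
    have h2 : ∀ k : ℕ, (1 - Complex.abs (a n)^2) * ‖(if k = n then (0:ℂ) else TT' a k (a n))‖
        ≤ (if k = n then (0:ℝ) else (1/2)^k * (1/1024)^(max k n)) := by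
      intro k
      by_cases h : k = n
      · simp [h]
      · simp only [h, if_false]
        exact cross_term_ub ha ha3 n k h
    have h3 := Summable.tsum_le_tsum h2 (hsumnorm.mul_left _) (beta_summable n)
    exact h3.trans (beta_tsum_le n)
  have hmain := main_term_lb ha n
  have hfin : (1 - Complex.abs (a n)^2) * Complex.abs (TT' a n (a n))
      ≤ (1 - Complex.abs (a n)^2) * Complex.abs (∑' k, TT' a k (a n))
        + (1 - Complex.abs (a n)^2) * Complex.abs rest := by
    rw [← mul_add]
    exact mul_le_mul_of_nonneg_left habs1 h1ρ2.le
  have := hmain.trans hfin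
  have hfinal : ((1:ℝ)/2)^(n+2) - (1/2)^(n+3)
      ≤ (1 - Complex.abs (a n)^2) * Complex.abs (∑' k, TT' a k (a n)) := by
    linarith
  refine le_trans ?_ hfinal
  have : ((1:ℝ)/2)^(n+2) = 2 * (1/2)^(n+3) := by ring
  rw [this]
  linarith [pow_pos (show (0:ℝ) < 1/2 by norm_num) (n+3)]

end six

lemma exists_pts (f : ℂ → ℂ) (hf : DifferentiableOn ℂ f (Metric.ball (0 : ℂ) 1))
    (hUnbounded : ¬ ∃ M : ℝ, ∀ z ∈ Metric.ball (0 : ℂ) 1, Complex.abs (f z) ≤ M) :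
    ∀ ε M : ℝ, ∃ z : ℂ, Complex.abs z < 1 ∧ 1/2 ≤ Complex.abs z
      ∧ M ≤ Complex.abs (f z) ∧ (0 < ε → 1 - Complex.abs z ≤ ε) := by
  intro ε M
  push_neg at hUnbounded
  set δ : ℝ := if 0 < ε then min ε (1/2) else 1/2 with hδ
  have hδpos : 0 < δ := by
    rw [hδ]; split_ifs with h
    · exact lt_min h (by norm_num)
    · norm_num
  have hδle : δ ≤ 1/2 := by
    rw [hδ]; split_ifs
    · exact min_le_right _ _
    · exact le_refl _
  set r : ℝ := 1 - δ with hr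
  have hr1 : r < 1 := by rw [hr]; linarith
  have hrhalf : 1/2 ≤ r := by rw [hr]; linarith
  have hsub : Metric.closedBall (0:ℂ) r ⊆ Metric.ball (0:ℂ) 1 := by
    apply Metric.closedBall_subset_ball
    exact hr1
  have hcompact : IsCompact (Metric.closedBall (0:ℂ) r) := isCompact_closedBall _ _
  have hcont : ContinuousOn (fun z => Complex.abs (f z)) (Metric.closedBall (0:ℂ) r) :=
    Complex.continuous_abs.comp_continuousOn (hf.continuousOn.mono hsub)
  obtain ⟨B, hB⟩ := hcompact.exists_bound_of_continuousOn (hf.continuousOn.mono hsub)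
  obtain ⟨z, hz1, hz2⟩ := hUnbounded (max M B + 1)
  refine ⟨z, by simpa using hz1, ?_, ?_, ?_⟩
  · -- |z| ≥ 1/2 : else z ∈ closed ball r, |f z| ≤ B contradiction
    by_contra hc
    push_neg at hc
    have hzin : z ∈ Metric.closedBall (0:ℂ) r := by
      simp only [Metric.mem_closedBall, Complex.dist_eq, sub_zero]
      calc Complex.abs z ≤ 1/2 := le_of_lt hc
        _ ≤ r := hrhalf
    have := hB z hzin
    rw [Complex.norm_eq_abs] at this
    have := lt_of_lt_of_le hz2 this
    have hle := le_max_right M B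
    linarith
  · calc M ≤ max M B := le_max_left _ _
      _ ≤ Complex.abs (f z) := by linarith [hz2]
  · intro hε
    have hrz : r < Complex.abs z := by
      by_contra hc
      push_neg at hc
      have hzin : z ∈ Metric.closedBall (0:ℂ) r := by
        simp only [Metric.mem_closedBall, Complex.dist_eq, sub_zero]
        exact hc
      have := hB z hzin
      rw [Complex.norm_eq_abs] at this
      have := lt_of_lt_of_le hz2 this
      linarith [le_max_right M B]
    have hδε : δ ≤ ε := by
      rw [hδ, if_pos hε]
      exact min_le_left _ _
    rw [hr] at hrz
    linarith

lemma exists_seq (f : ℂ → ℂ) (hf : DifferentiableOn ℂ f (Metric.ball (0 : ℂ) 1))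
    (hUnbounded : ¬ ∃ M : ℝ, ∀ z ∈ Metric.ball (0 : ℂ) 1, Complex.abs (f z) ≤ M) :
    ∃ a : ℕ → ℂ, (∀ n, Complex.abs (a n) < 1) ∧ (∀ n, 1/2 ≤ Complex.abs (a n))
      ∧ (∀ k n, k < n → 1 - Complex.abs (a n) ≤ (1/1024)^n * (1 - Complex.abs (a k)))
      ∧ (∀ n, (16:ℝ)^n ≤ Complex.abs (f (a n))) := by
  choose Z h1 h2 h3 h4 using exists_pts f hf hUnbounded
  -- recursive construction of (point, running minimum of 1 - |point|)
  let step : ℕ → (ℂ × ℝ) → (ℂ × ℝ) := fun n p =>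
    let z := Z ((1/1024)^(n+1) * p.2) ((16:ℝ)^(n+1))
    (z, min (1 - Complex.abs z) p.2)
  let s : ℕ → ℂ × ℝ := fun n => Nat.rec (motive := fun _ => ℂ × ℝ)
    (Z 1 1, 1 - Complex.abs (Z 1 1)) step n
  have hs0 : s 0 = (Z 1 1, 1 - Complex.abs (Z 1 1)) := rfl
  have hsS : ∀ n, s (n+1) = step n (s n) := fun n => rfl
  set a : ℕ → ℂ := fun n => (s n).1 with ha
  -- invariant: 0 < (s n).2
  have hpos : ∀ n, 0 < (s n).2 := by
    intro n
    induction n with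
    | zero =>
      rw [hs0]
      simp only
      linarith [h1 1 1]
    | succ m ih =>
      rw [hsS m]
      simp only [step]
      apply lt_min _ ih
      have hεpos : 0 < ((1:ℝ)/1024)^(m+1) * (s m).2 := mul_pos (by positivity) ih
      linarith [h1 ((1/1024)^(m+1) * (s m).2) ((16:ℝ)^(m+1))]
  -- basic properties of a n
  have hane : ∀ n, Complex.abs (a n) < 1 ∧ 1/2 ≤ Complex.abs (a n)
      ∧ (16:ℝ)^n ≤ Complex.abs (f (a n)) := by
    intro n
    cases n with
    | zero =>
      refine ⟨h1 1 1, h2 1 1, ?_⟩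
      show (16:ℝ)^0 ≤ Complex.abs (f (Z 1 1))
      simpa using h3 1 1
    | succ m =>
      have heq : a (m+1) = Z ((1/1024)^(m+1) * (s m).2) ((16:ℝ)^(m+1)) := by
        show (s (m+1)).1 = _
        rw [hsS m]
      rw [heq]
      exact ⟨h1 _ _, h2 _ _, h3 _ _⟩
  -- (s n).2 ≤ 1 - |a k| for k ≤ n
  have hmin : ∀ n, (s n).2 ≤ 1 - Complex.abs (a n) := by
    intro n
    cases n with
    | zero => exact le_of_eq rfl
    | succ m =>
      show (s (m+1)).2 ≤ 1 - Complex.abs (s (m+1)).1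
      rw [hsS m]
      exact min_le_left _ _
  have hmono : ∀ n, (s (n+1)).2 ≤ (s n).2 := by
    intro n
    rw [hsS n]
    exact min_le_right _ _
  have hmono' : ∀ k n, k ≤ n → (s n).2 ≤ (s k).2 := by
    intro k n hkn
    induction n with
    | zero =>
      have hk0 : k = 0 := Nat.le_zero.mp hkn
      rw [hk0]
    | succ m ih =>
      rcases Nat.lt_or_ge k (m+1) with h | h
      · exact (hmono m).trans (ih (Nat.lt_succ_iff.mp h))
      · have hkm : k = m + 1 := le_antisymm hkn h
        rw [hkm]
  refine ⟨a, fun n => (hane n).1, fun n => (hane n).2.1, ?_, fun n => (hane n).2.2⟩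
  intro k n hkn
  -- n = m+1 for some m, k ≤ m
  obtain ⟨m, rfl⟩ : ∃ m, n = m + 1 := ⟨n - 1, by omega⟩
  have hstep : a (m+1) = Z ((1/1024)^(m+1) * (s m).2) ((16:ℝ)^(m+1)) := by
    show (s (m+1)).1 = _
    rw [hsS m]
  have hεpos : 0 < ((1:ℝ)/1024)^(m+1) * (s m).2 :=
    mul_pos (by positivity) (hpos m)
  have h5 := h4 ((1/1024)^(m+1) * (s m).2) ((16:ℝ)^(m+1)) hεpos
  rw [← hstep] at h5
  refine h5.trans ?_
  apply mul_le_mul_of_nonneg_left _ (by positivity)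
  exact ((hmono' k m (Nat.lt_succ_iff.mp hkn)).trans (hmin k))

lemma stmt4_aux
    (f : ℂ → ℂ) (hf : DifferentiableOn ℂ f (Metric.ball (0 : ℂ) 1))
    (hBloch : ∃ C : ℝ, ∀ z ∈ Metric.ball (0 : ℂ) 1,
      (1 - Complex.abs z ^ 2) * Complex.abs (deriv f z) ≤ C)
    (hUnbounded : ¬ ∃ M : ℝ, ∀ z ∈ Metric.ball (0 : ℂ) 1, Complex.abs (f z) ≤ M) :
    ∃ g : ℂ → ℂ, DifferentiableOn ℂ g (Metric.ball (0 : ℂ) 1) ∧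
      (∃ M : ℝ, ∀ r ∈ Set.Ioo (0 : ℝ) 1,
        (∫ θ in (0 : ℝ)..(2 * Real.pi),
          Complex.abs (deriv g ((r : ℂ) * Complex.exp (θ * Complex.I)))) ≤ M) ∧
      ¬ ∃ C : ℝ, ∀ z ∈ Metric.ball (0 : ℂ) 1,
        (1 - Complex.abs z ^ 2) * Complex.abs (deriv (fun w => g w * f w) z) ≤ C := by
  obtain ⟨a, ha, ha2, ha3, haf⟩ := exists_seq f hf hUnbounded
  refine ⟨gg a, ?_, ⟨2*π + 1, ?_⟩, ?_⟩
  · -- differentiability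
    intro z hz
    have hz1 : Complex.abs z < 1 := by
      simpa [Complex.dist_eq] using hz
    exact (hasDerivAt_gg ha ha2 hz1).differentiableAt.differentiableWithinAt
  · -- integral bound
    intro r hr
    obtain ⟨hr0, hr1⟩ := hr
    have hcongr : ∀ θ ∈ Set.uIcc (0:ℝ) (2*π),
        Complex.abs (deriv (gg a) ((r:ℂ) * Complex.exp (θ * Complex.I)))
        = Complex.abs ((fun z => ∑' k, TT' a k z) ((r:ℂ) * Complex.exp (θ * Complex.I))) := by
      intro θ _
      have hzlt : Complex.abs ((r:ℂ) * Complex.exp (θ * Complex.I)) < 1 := by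
        rw [gamma_abs hr0 θ]; exact hr1
      rw [deriv_gg ha ha2 hzlt]
    rw [intervalIntegral.integral_congr hcongr]
    exact integral_hh_le ha hr0 hr1
  · -- not Bloch
    rintro ⟨C, hC⟩
    obtain ⟨Cf, hCf⟩ := hBloch
    have h0mem : (0:ℂ) ∈ Metric.ball (0:ℂ) 1 := by simp
    have hCf0 : 0 ≤ Cf := by
      refine le_trans ?_ (hCf 0 h0mem)
      simp [Complex.abs.nonneg]
    obtain ⟨n, hn⟩ := pow_unbounded_of_one_lt (8*(C + 4*Cf) : ℝ) (show (1:ℝ) < 8 by norm_num)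
    have hmem : a n ∈ Metric.ball (0:ℂ) 1 := by
      simp [Complex.dist_eq]
      exact ha n
    have hρ2 : (0:ℝ) < 1 - Complex.abs (a n)^2 := by
      nlinarith [ha n, Complex.abs.nonneg (a n)]
    have hgd : DifferentiableAt ℂ (gg a) (a n) := (hasDerivAt_gg ha ha2 (ha n)).differentiableAt
    have hfd : DifferentiableAt ℂ f (a n) :=
      (hf (a n) hmem).differentiableAt (Metric.isOpen_ball.mem_nhds hmem)
    have hderiv : deriv (fun w => gg a w * f w) (a n)
        = deriv (gg a) (a n) * f (a n) + gg a (a n) * deriv f (a n) := deriv_mul hgd hfd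
    -- triangle inequality step
    have htri : Complex.abs (deriv (gg a) (a n) * f (a n))
        ≤ Complex.abs (deriv (fun w => gg a w * f w) (a n))
          + Complex.abs (gg a (a n) * deriv f (a n)) := by
      have h1 : deriv (gg a) (a n) * f (a n)
          = deriv (fun w => gg a w * f w) (a n) - gg a (a n) * deriv f (a n) := by
        rw [hderiv]; ring
      rw [h1]
      exact Complex.abs.sub_le_add _ _
    have hstep1 : (1 - Complex.abs (a n)^2) * Complex.abs (deriv (gg a) (a n) * f (a n))
        ≤ C + 4 * Cf := by
      have h2 : (1 - Complex.abs (a n)^2) * Complex.abs (deriv (fun w => gg a w * f w) (a n))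
          ≤ C := hC (a n) hmem
      have h3 : (1 - Complex.abs (a n)^2) * Complex.abs (gg a (a n) * deriv f (a n))
          ≤ 4 * Cf := by
        rw [map_mul]
        have h4 : Complex.abs (gg a (a n)) ≤ 4 := gg_bound ha ha2 (le_of_lt (ha n))
        have h5 : (1 - Complex.abs (a n)^2) * Complex.abs (deriv f (a n)) ≤ Cf :=
          hCf (a n) hmem
        calc (1 - Complex.abs (a n)^2) * (Complex.abs (gg a (a n)) * Complex.abs (deriv f (a n)))
            ≤ (1 - Complex.abs (a n)^2) * (4 * Complex.abs (deriv f (a n))) := by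
              apply mul_le_mul_of_nonneg_left _ hρ2.le
              apply mul_le_mul_of_nonneg_right h4 (Complex.abs.nonneg _)
          _ = 4 * ((1 - Complex.abs (a n)^2) * Complex.abs (deriv f (a n))) := by ring
          _ ≤ 4 * Cf := by linarith
      calc (1 - Complex.abs (a n)^2) * Complex.abs (deriv (gg a) (a n) * f (a n))
          ≤ (1 - Complex.abs (a n)^2) * (Complex.abs (deriv (fun w => gg a w * f w) (a n))
            + Complex.abs (gg a (a n) * deriv f (a n))) :=
            mul_le_mul_of_nonneg_left htri hρ2.le
        _ = (1 - Complex.abs (a n)^2) * Complex.abs (deriv (fun w => gg a w * f w) (a n))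
            + (1 - Complex.abs (a n)^2) * Complex.abs (gg a (a n) * deriv f (a n)) := by ring
        _ ≤ C + 4 * Cf := add_le_add h2 h3
    -- lower bound
    have hlow := hh_lower ha ha2 ha3 n
    have hdg : deriv (gg a) (a n) = ∑' k, TT' a k (a n) := deriv_gg ha ha2 (ha n)
    have hstep2 : ((1:ℝ)/2)^(n+3) * 16^n
        ≤ (1 - Complex.abs (a n)^2) * Complex.abs (deriv (gg a) (a n) * f (a n)) := by
      rw [map_mul, hdg, ← mul_assoc]
      apply mul_le_mul hlow (haf n) (by positivity) ?_
      · rw [← hdg]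
        positivity
    have hcomb : ((1:ℝ)/2)^(n+3) * 16^n = 8^n / 8 := by
      calc ((1:ℝ)/2)^(n+3) * 16^n = ((1/2)^n * 16^n) * (1/2)^3 := by rw [pow_add]; ring
        _ = (((1:ℝ)/2) * 16)^n * (1/8) := by rw [mul_pow]; norm_num
        _ = 8^n / 8 := by
            rw [show ((1:ℝ)/2) * 16 = 8 by norm_num]
            ring
    rw [hcomb] at hstep2
    have : (8:ℝ)^n / 8 ≤ C + 4 * Cf := hstep2.trans hstep1
    linarith

/-- If `f` is an unbounded Bloch function on the unit disc, then there exists `g`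
analytic on the disc with `g' ∈ H¹` (i.e. `sup_{0<r<1} ∫₀^{2π} |g'(r e^{iθ})| dθ < ∞`)
such that `g · f` is not a Bloch function. -/
theorem stmt4
    (f : ℂ → ℂ) (hf : DifferentiableOn ℂ f (Metric.ball (0 : ℂ) 1))
    (hBloch : ∃ C : ℝ, ∀ z ∈ Metric.ball (0 : ℂ) 1,
      (1 - ‖z‖ ^ 2) * ‖deriv f z‖ ≤ C)
    (hUnbounded : ¬ ∃ M : ℝ, ∀ z ∈ Metric.ball (0 : ℂ) 1, ‖f z‖ ≤ M) :
    ∃ g : ℂ → ℂ, DifferentiableOn ℂ g (Metric.ball (0 : ℂ) 1) ∧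
      (∃ M : ℝ, ∀ r ∈ Set.Ioo (0 : ℝ) 1,
        (∫ θ in (0 : ℝ)..(2 * Real.pi),
          ‖deriv g ((r : ℂ) * Complex.exp (θ * Complex.I))‖) ≤ M) ∧
      ¬ ∃ C : ℝ, ∀ z ∈ Metric.ball (0 : ℂ) 1,
        (1 - ‖z‖ ^ 2) * ‖deriv (fun w => g w * f w) z‖ ≤ C := by
  exact stmt4_aux f hf hBloch hUnbounded
end

section
/- Let S(z) = exp(-(1+z)/(1-z)) for z in the unit disc D, and let f be analytic in D with |f(z)| → ∞ as z → 1 (z ∈ D). Then for every a ∈ (0,1), the function F(z) = S(z)f(z) satisfies |F(z)| → ∞ as z → 1 along the circle Γ_a = {z ∈ D : |z - a| = 1 - a}; that is, F has the asymptotic value ∞ at the point 1. -/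
open Complex Filter Set

/-- Let `S z = exp (-(1+z)/(1-z))` and let `f` be analytic in the unit disc with
`|f z| → ∞` as `z → 1` within the disc. Then for every `a ∈ (0,1)`, the function
`F = S · f` satisfies `|F z| → ∞` as `z → 1` along the circle
`Γ_a = {z ∈ D : |z - a| = 1 - a}`. -/
theorem stmt6
    (S : ℂ → ℂ) (hS : ∀ z : ℂ, S z = Complex.exp (-((1 + z) / (1 - z))))
    (f : ℂ → ℂ) (hf : DifferentiableOn ℂ f (Metric.ball (0 : ℂ) 1))
    (hlim : Tendsto (fun z => ‖f z‖)
      (nhdsWithin 1 (Metric.ball (0 : ℂ) 1)) atTop) :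
    ∀ a ∈ Set.Ioo (0 : ℝ) 1,
      Tendsto (fun z => ‖S z * f z‖)
        (nhdsWithin 1 {z : ℂ | ‖z‖ < 1 ∧ ‖z - (a : ℂ)‖ = 1 - a})
        atTop := by
  intro a ha
  obtain ⟨ha0, ha1⟩ := ha
  set T : Set ℂ := {z : ℂ | ‖z‖ < 1 ∧ ‖z - (a : ℂ)‖ = 1 - a} with hT
  have hsub : T ⊆ Metric.ball (0 : ℂ) 1 := by
    intro z hz
    simpa [Metric.mem_ball, Complex.dist_eq] using hz.1
  have hfT : Tendsto (fun z => ‖f z‖) (nhdsWithin 1 T) atTop :=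
    hlim.mono_left (nhdsWithin_mono _ hsub)
  have key : ∀ z ∈ T, ‖S z * f z‖
      = Real.exp (-(a / (1 - a))) * ‖f z‖ := by
    intro z hz
    obtain ⟨hz1, hz2⟩ := hz
    have hr : z.re < 1 := lt_of_le_of_lt (Complex.re_le_norm z) hz1
    -- circle condition in coordinates
    have hc : (z.re - a) ^ 2 + z.im ^ 2 = (1 - a) ^ 2 := by
      have h : Complex.normSq (z - (a : ℂ)) = (1 - a) ^ 2 := by
        rw [← Complex.sq_norm, hz2]
      rw [Complex.normSq_apply, Complex.sub_re, Complex.sub_im, Complex.ofReal_re,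
        Complex.ofReal_im, sub_zero] at h
      nlinarith [h]
    have hre : ((1 + z) / (1 - z)).re = a / (1 - a) := by
      have hN : (1 - z.re) ^ 2 + z.im ^ 2 = 2 * (1 - a) * (1 - z.re) := by nlinarith
      have hNpos : (0:ℝ) < (1 - z.re) ^ 2 + z.im ^ 2 := by nlinarith
      rw [Complex.div_re]
      have h1 : (1 + z).re = 1 + z.re := by simp
      have h2 : (1 + z).im = z.im := by simp
      have h3 : (1 - z).re = 1 - z.re := by simp
      have h4 : (1 - z).im = -z.im := by simp
      have h5 : Complex.normSq (1 - z) = (1 - z.re) ^ 2 + z.im ^ 2 := by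
        simp [Complex.normSq_apply, h3, h4, sq]
      rw [h1, h2, h3, h4, h5]
      rw [← add_div, div_eq_div_iff hNpos.ne' (by linarith : (0:ℝ) < 1 - a).ne']
      nlinarith
    have hSabs : ‖S z‖ = Real.exp (-(a / (1 - a))) := by
      rw [hS z, Complex.norm_exp, Complex.neg_re, hre]
    rw [norm_mul, hSabs]
  have hmain : Tendsto (fun z => Real.exp (-(a / (1 - a))) * ‖f z‖)
      (nhdsWithin 1 T) atTop :=
    hfT.const_mul_atTop (Real.exp_pos _)
  refine hmain.congr' ?_
  filter_upwards [self_mem_nhdsWithin] with z hz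
  exact (key z hz).symm
end
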